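/- arXiv:2404.10489 — 6 statements merged into one kernel-verified Lean document; each statement's English description precedes it below -/
import Mathlib

section
/- For every integer n ≥ 0 and every real t, the quantity 𝓘ₙ(t) = ∫₀^∞ Heₙ(ω) e^{−ω²/2} e^{itω} dω satisfies |𝓘ₙ(t)| ≤ √(π/2) · 2^{n/2} · Γ(1 + n/2). -/
open MeasureTheory

/-- Probabilists' Hermite polynomial `Heₙ(x) = (−1)ⁿ e^{x²/2} dⁿ/dxⁿ e^{−x²/2}`. -/
noncomputable def He (n : ℕ) (x : ℝ) : ℝ :=
  (-1) ^ n * Real.exp (x ^ 2 / 2) * iteratedDeriv n (fun y => Real.exp (-(y ^ 2) / 2)) x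

/-- `𝓘ₙ(t) = ∫₀^∞ Heₙ(ω) e^{−ω²/2} e^{itω} dω`. -/
noncomputable def calI (n : ℕ) (t : ℝ) : ℂ :=
  ∫ ω in Set.Ioi (0 : ℝ),
    (He n ω : ℂ) * Complex.exp (-(ω : ℂ) ^ 2 / 2) * Complex.exp (Complex.I * (t : ℂ) * (ω : ℂ))

/-!
The Gaussian moment representation `√(2π) Heₙ(x) = ∫ (x + iz)ⁿ e^{-z²/2} dz` holds because
both sides satisfy the three-term Hermite recurrence, the right side by Gaussian integration by
parts. It gives `√(2π) |Heₙ(x)| e^{-x²/2} ≤ ∫ |x + iz|ⁿ e^{-|x + iz|²/2} dz`, and integrating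
over `x > 0` yields half of the radial integral `∫_ℂ |w|ⁿ e^{-|w|²/2} = 2π 2^{n/2} Γ(1 + n/2)`.
-/

open Complex Filter Polynomial Set
open scoped Real

namespace Polynomial

theorem derivative_hermite_succ (n : ℕ) :
    derivative (hermite (n + 1)) = ((n : ℤ[X]) + 1) * hermite n := by
  induction n with
  | zero => simp [hermite_zero]
  | succ n ih =>
    rw [hermite_succ (n + 1), derivative_sub, derivative_mul, derivative_X, one_mul, ih,
      derivative_mul, derivative_add, derivative_natCast, derivative_one, hermite_succ n]
    push_cast
    ring

theorem hermite_add_two (n : ℕ) :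
    hermite (n + 2) = X * hermite (n + 1) - ((n : ℤ[X]) + 1) * hermite n := by
  rw [hermite_succ (n + 1), derivative_hermite_succ]

end Polynomial

theorem He_eq_aeval_hermite (n : ℕ) (x : ℝ) : He n x = aeval x (hermite n) := by
  have hgauss : (fun y : ℝ => Real.exp (-(y ^ 2) / 2)) = fun y => Real.exp (-(y ^ 2 / 2)) := by
    ext y; ring_nf
  rw [He, hermite_eq_deriv_gaussian', hgauss, iteratedDeriv_eq_iterate]
  ring

theorem hasDerivAt_exp_neg_sq_div_two (z : ℝ) :
    HasDerivAt (fun z : ℝ => Real.exp (-z ^ 2 / 2)) (-z * Real.exp (-z ^ 2 / 2)) z := by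
  have h : HasDerivAt (fun z : ℝ => -z ^ 2 / 2) (-z) z :=
    ((hasDerivAt_pow 2 z).fun_neg.div_const 2).congr_deriv (by ring)
  simpa [mul_comm] using h.exp

theorem hasDerivAt_add_mul_I_pow (x : ℝ) (k : ℕ) (z : ℝ) :
    HasDerivAt (fun z : ℝ => ((x : ℂ) + z * I) ^ k)
      (k * ((x : ℂ) + z * I) ^ (k - 1) * I) z := by
  have hlin : HasDerivAt (fun z : ℝ => (x : ℂ) + z * I) I z := by
    simpa using ((hasDerivAt_id z).ofReal_comp.mul_const I).const_add (x : ℂ)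
  exact (hasDerivAt_pow k _).comp z hlin

theorem integrable_abs_pow_mul_exp_neg_sq_div_two (j : ℕ) :
    Integrable fun z : ℝ => |z| ^ j * Real.exp (-z ^ 2 / 2) := by
  have h := (integrable_rpow_mul_exp_neg_mul_sq (b := 1 / 2) (s := j) (by norm_num)
    (by linarith [(Nat.cast_nonneg j : (0 : ℝ) ≤ j)])).norm
  refine h.congr (Eventually.of_forall fun z => ?_)
  dsimp only
  rw [Real.norm_eq_abs, abs_mul, Real.rpow_natCast, abs_pow, Real.abs_exp]
  ring_nf

theorem integrable_norm_add_mul_I_pow_mul_exp_neg_sq_div_two (x : ℝ) (k : ℕ) :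
    Integrable fun z : ℝ => ‖(x : ℂ) + z * I‖ ^ k * Real.exp (-z ^ 2 / 2) := by
  have hmajor : Integrable fun z : ℝ =>
      2 ^ (k - 1) * (|x| ^ k * Real.exp (-z ^ 2 / 2) + |z| ^ k * Real.exp (-z ^ 2 / 2)) :=
    (((integrable_abs_pow_mul_exp_neg_sq_div_two 0).const_mul (|x| ^ k)).congr
      (Eventually.of_forall fun z => by simp)).add
      (integrable_abs_pow_mul_exp_neg_sq_div_two k) |>.const_mul _
  refine hmajor.mono' (by fun_prop) (Eventually.of_forall fun z => ?_)
  have hnorm : ‖(x : ℂ) + z * I‖ ≤ |x| + |z| := by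
    simpa [norm_real] using norm_add_le (x : ℂ) (z * I)
  rw [Real.norm_of_nonneg (by positivity), ← add_mul, ← mul_assoc]
  gcongr
  exact (pow_le_pow_left₀ (norm_nonneg _) hnorm k).trans
    (add_pow_le (abs_nonneg x) (abs_nonneg z) k)

theorem integrable_add_mul_I_pow_mul_exp_neg_sq_div_two (x : ℝ) (k : ℕ) :
    Integrable fun z : ℝ => ((x : ℂ) + z * I) ^ k * (Real.exp (-z ^ 2 / 2) : ℂ) :=
  (integrable_norm_add_mul_I_pow_mul_exp_neg_sq_div_two x k).mono' (by fun_prop)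
    (Eventually.of_forall fun z => by
      rw [norm_mul, norm_pow, norm_real, Real.norm_of_nonneg (Real.exp_pos _).le])

theorem integrable_mul_add_mul_I_pow_mul_exp_neg_sq_div_two (x : ℝ) (k : ℕ) :
    Integrable fun z : ℝ =>
      (z : ℂ) * ((x : ℂ) + z * I) ^ k * (Real.exp (-z ^ 2 / 2) : ℂ) := by
  refine (integrable_norm_add_mul_I_pow_mul_exp_neg_sq_div_two x (k + 1)).mono' (by fun_prop)
    (Eventually.of_forall fun z => ?_)
  have hz : |z| ≤ ‖(x : ℂ) + z * I‖ := by
    simpa using abs_im_le_norm ((x : ℂ) + z * I)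
  rw [norm_mul, norm_mul, norm_pow, norm_real, norm_real,
    Real.norm_of_nonneg (Real.exp_pos _).le, Real.norm_eq_abs, pow_succ' ‖(x : ℂ) + z * I‖ k]
  gcongr

noncomputable def hermiteIntegral (n : ℕ) (x : ℝ) : ℂ :=
  ∫ z : ℝ, ((x : ℂ) + z * I) ^ n * (Real.exp (-z ^ 2 / 2) : ℂ)

-- At `k = 0` the truncated `k - 1` is harmless: the right side vanishes.
theorem integral_mul_add_mul_I_pow_mul_exp_neg_sq_div_two (x : ℝ) (k : ℕ) :
    ∫ z : ℝ, (z : ℂ) * ((x : ℂ) + z * I) ^ k * (Real.exp (-z ^ 2 / 2) : ℂ)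
      = k * I * hermiteIntegral (k - 1) x := by
  have hibp := integral_mul_deriv_eq_deriv_mul_of_integrable
    (u := fun z : ℝ => ((x : ℂ) + z * I) ^ k)
    (v := fun z : ℝ => (Real.exp (-z ^ 2 / 2) : ℂ))
    (fun z _ => hasDerivAt_add_mul_I_pow x k z)
    (fun z _ => (hasDerivAt_exp_neg_sq_div_two z).ofReal_comp)
    ((integrable_mul_add_mul_I_pow_mul_exp_neg_sq_div_two x k).neg.congr
      (Eventually.of_forall fun z => by simp only [Pi.mul_apply, Pi.neg_apply]; push_cast; ring))
    (((integrable_add_mul_I_pow_mul_exp_neg_sq_div_two x (k - 1)).const_mul (k * I)).congr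
      (Eventually.of_forall fun z => by simp only [Pi.mul_apply]; ring))
    (integrable_add_mul_I_pow_mul_exp_neg_sq_div_two x k)
  calc ∫ z : ℝ, (z : ℂ) * ((x : ℂ) + z * I) ^ k * (Real.exp (-z ^ 2 / 2) : ℂ)
      = -∫ z : ℝ, ((x : ℂ) + z * I) ^ k * ((-z * Real.exp (-z ^ 2 / 2) : ℝ) : ℂ) := by
        rw [← integral_neg]
        congr 1
        ext z
        push_cast
        ring
    _ = ∫ z : ℝ, k * I * (((x : ℂ) + z * I) ^ (k - 1) * (Real.exp (-z ^ 2 / 2) : ℂ)) := by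
        rw [hibp, neg_neg]
        congr 1
        ext z
        ring
    _ = k * I * hermiteIntegral (k - 1) x := integral_const_mul _ _

theorem hermiteIntegral_succ (k : ℕ) (x : ℝ) :
    hermiteIntegral (k + 1) x = x * hermiteIntegral k x - k * hermiteIntegral (k - 1) x := by
  have hsplit : (fun z : ℝ => ((x : ℂ) + z * I) ^ (k + 1) * (Real.exp (-z ^ 2 / 2) : ℂ)) =
      fun z => x * (((x : ℂ) + z * I) ^ k * (Real.exp (-z ^ 2 / 2) : ℂ)) +
        I * ((z : ℂ) * ((x : ℂ) + z * I) ^ k * (Real.exp (-z ^ 2 / 2) : ℂ)) := by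
    ext z; ring
  rw [hermiteIntegral, hsplit,
    integral_add ((integrable_add_mul_I_pow_mul_exp_neg_sq_div_two x k).const_mul _)
      ((integrable_mul_add_mul_I_pow_mul_exp_neg_sq_div_two x k).const_mul _),
    integral_const_mul, integral_const_mul, integral_mul_add_mul_I_pow_mul_exp_neg_sq_div_two,
    ← hermiteIntegral]
  linear_combination (k * hermiteIntegral (k - 1) x) * I_mul_I

theorem hermiteIntegral_zero (x : ℝ) : hermiteIntegral 0 x = Real.sqrt (2 * π) := by
  have hgauss : ∫ z : ℝ, Real.exp (-z ^ 2 / 2) = Real.sqrt (2 * π) := by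
    convert integral_gaussian (1 / 2) using 2
    · ring_nf
    · field_simp
  simp only [hermiteIntegral, pow_zero, one_mul]
  rw [integral_complex_ofReal, hgauss]

theorem hermiteIntegral_eq_aeval_hermite (n : ℕ) (x : ℝ) :
    hermiteIntegral n x = Real.sqrt (2 * π) * (aeval x (hermite n) : ℝ) := by
  induction n using Nat.twoStepInduction with
  | zero => simp [hermiteIntegral_zero]
  | one => simp [hermiteIntegral_succ 0, hermiteIntegral_zero, mul_comm]
  | more n ih₀ ih₁ =>
    rw [hermiteIntegral_succ, ih₁, Nat.add_sub_cancel, ih₀, hermite_add_two]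
    simp only [map_sub, map_mul, map_add, map_natCast, map_one, aeval_X]
    push_cast
    ring

theorem sqrt_two_pi_mul_abs_He_mul_exp_le (n : ℕ) (x : ℝ) :
    Real.sqrt (2 * π) * |He n x| * Real.exp (-x ^ 2 / 2) ≤
      ∫ z : ℝ, ‖(x : ℂ) + z * I‖ ^ n * Real.exp (-‖(x : ℂ) + z * I‖ ^ 2 / 2) := by
  have hnorm : Real.sqrt (2 * π) * |He n x| = ‖hermiteIntegral n x‖ := by
    rw [hermiteIntegral_eq_aeval_hermite, He_eq_aeval_hermite, norm_mul, norm_real, norm_real,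
      Real.norm_of_nonneg (Real.sqrt_nonneg _), Real.norm_eq_abs]
  have hexp (z : ℝ) : Real.exp (-‖(x : ℂ) + z * I‖ ^ 2 / 2) =
      Real.exp (-z ^ 2 / 2) * Real.exp (-x ^ 2 / 2) := by
    rw [← Real.exp_add, norm_add_mul_I, Real.sq_sqrt (by positivity)]
    ring_nf
  calc Real.sqrt (2 * π) * |He n x| * Real.exp (-x ^ 2 / 2)
      ≤ (∫ z : ℝ, ‖((x : ℂ) + z * I) ^ n * (Real.exp (-z ^ 2 / 2) : ℂ)‖) *
          Real.exp (-x ^ 2 / 2) := by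
        rw [hnorm]
        gcongr
        exact norm_integral_le_integral_norm _
    _ = ∫ z : ℝ, ‖(x : ℂ) + z * I‖ ^ n * Real.exp (-‖(x : ℂ) + z * I‖ ^ 2 / 2) := by
        rw [← integral_mul_const]
        congr 1
        ext z
        rw [hexp, norm_mul, norm_pow, norm_real, Real.norm_of_nonneg (Real.exp_pos _).le]
        ring

theorem Complex.integral_norm_pow_mul_exp_neg_norm_sq_div_two (n : ℕ) :
    ∫ w : ℂ, ‖w‖ ^ n * Real.exp (-‖w‖ ^ 2 / 2) =
      2 * π * 2 ^ ((n : ℝ) / 2) * Real.Gamma (1 + (n : ℝ) / 2) := by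
  have h := Complex.integral_rpow_mul_exp_neg_mul_rpow (p := 2) (q := n) (b := 1 / 2) one_le_two
    (by linarith [(Nat.cast_nonneg n : (0 : ℝ) ≤ n)]) (by norm_num)
  simp only [Real.rpow_natCast, Real.rpow_two] at h
  rw [show (fun w : ℂ => ‖w‖ ^ n * Real.exp (-‖w‖ ^ 2 / 2)) =
    fun w : ℂ => ‖w‖ ^ n * Real.exp (-(1 / 2) * ‖w‖ ^ 2) by ext w; ring_nf, h]
  rw [show -((n : ℝ) + 2) / 2 = -((n : ℝ) / 2 + 1) by ring,
    show ((n : ℝ) + 2) / 2 = 1 + (n : ℝ) / 2 by ring,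
    one_div, Real.inv_rpow (by norm_num), ← Real.rpow_neg (by norm_num), neg_neg,
    Real.rpow_add_one (by norm_num)]
  ring

theorem Complex.integral_prod_add_mul_I {E : Type*} [NormedAddCommGroup E] [NormedSpace ℝ E]
    (f : ℂ → E) : ∫ p : ℝ × ℝ, f (p.1 + p.2 * I) = ∫ w : ℂ, f w := by
  have h := volume_preserving_equiv_real_prod.symm.integral_comp
    measurableEquivRealProd.symm.measurableEmbedding f
  simpa [measurableEquivRealProd_symm_apply, mk_eq_add_mul_I] using h

theorem Complex.integrable_prod_add_mul_I {E : Type*} [NormedAddCommGroup E] {f : ℂ → E}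
    (hf : Integrable f) : Integrable fun p : ℝ × ℝ => f (p.1 + p.2 * I) := by
  have h := (volume_preserving_equiv_real_prod.symm.integrable_comp_emb
    measurableEquivRealProd.symm.measurableEmbedding).mpr hf
  simpa [Function.comp_def, measurableEquivRealProd_symm_apply,
    mk_eq_add_mul_I] using h

theorem Complex.integrable_norm_pow_mul_exp_neg_norm_sq_div_two (n : ℕ) :
    Integrable fun w : ℂ => ‖w‖ ^ n * Real.exp (-‖w‖ ^ 2 / 2) := by
  -- a non-integrable function has integral `0`
  refine Integrable.of_integral_ne_zero ?_
  rw [Complex.integral_norm_pow_mul_exp_neg_norm_sq_div_two]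
  positivity

theorem integrable_integral_norm_add_mul_I_pow (n : ℕ) :
    Integrable fun x : ℝ =>
      ∫ z : ℝ, ‖(x : ℂ) + z * I‖ ^ n * Real.exp (-‖(x : ℂ) + z * I‖ ^ 2 / 2) :=
  (Complex.integrable_prod_add_mul_I
    (Complex.integrable_norm_pow_mul_exp_neg_norm_sq_div_two n)).integral_prod_left

theorem integral_Ioi_integral_norm_add_mul_I_pow (n : ℕ) :
    ∫ x in Ioi (0 : ℝ), ∫ z : ℝ,
        ‖(x : ℂ) + z * I‖ ^ n * Real.exp (-‖(x : ℂ) + z * I‖ ^ 2 / 2) =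
      π * 2 ^ ((n : ℝ) / 2) * Real.Gamma (1 + (n : ℝ) / 2) := by
  set G : ℝ → ℝ := fun x =>
    ∫ z : ℝ, ‖(x : ℂ) + z * I‖ ^ n * Real.exp (-‖(x : ℂ) + z * I‖ ^ 2 / 2) with hG
  have heven (x : ℝ) : G |x| = G x := by
    simp only [hG, norm_add_mul_I, sq_abs]
  have hfull : ∫ x, G x = 2 * π * 2 ^ ((n : ℝ) / 2) * Real.Gamma (1 + (n : ℝ) / 2) := by
    rw [← Complex.integral_norm_pow_mul_exp_neg_norm_sq_div_two,
      ← Complex.integral_prod_add_mul_I, Measure.volume_eq_prod,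
      integral_prod _ (Complex.integrable_prod_add_mul_I
        (Complex.integrable_norm_pow_mul_exp_neg_norm_sq_div_two n))]
  have hhalf := integral_comp_abs (f := G)
  simp only [heven, hfull] at hhalf
  linarith

theorem norm_calI_integrand (n : ℕ) (t ω : ℝ) :
    ‖(He n ω : ℂ) * Complex.exp (-(ω : ℂ) ^ 2 / 2) *
        Complex.exp (Complex.I * (t : ℂ) * (ω : ℂ))‖ = |He n ω| * Real.exp (-ω ^ 2 / 2) := by
  rw [show Complex.I * (t : ℂ) * (ω : ℂ) = ((t * ω : ℝ) : ℂ) * I by push_cast; ring,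
    show -(ω : ℂ) ^ 2 / 2 = ((-ω ^ 2 / 2 : ℝ) : ℂ) by push_cast; ring,
    norm_mul, norm_mul, norm_exp_ofReal_mul_I, ← ofReal_exp, norm_real, norm_real,
    Real.norm_of_nonneg (Real.exp_pos _).le, Real.norm_eq_abs, mul_one]

theorem stmt_0 (n : ℕ) (t : ℝ) :
    ‖calI n t‖ ≤ Real.sqrt (Real.pi / 2) * (2 : ℝ) ^ ((n : ℝ) / 2) *
      Real.Gamma (1 + (n : ℝ) / 2) := by
  set c := Real.sqrt (2 * π)
  have hc : 0 < c := by positivity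
  have hpi : Real.sqrt (π / 2) = c⁻¹ * π := by
    rw [eq_inv_mul_iff_mul_eq₀ hc.ne', ← Real.sqrt_mul (by positivity),
      show 2 * π * (π / 2) = π ^ 2 by ring, Real.sqrt_sq Real.pi_pos.le]
  calc ‖calI n t‖ ≤ ∫ ω in Ioi (0 : ℝ), |He n ω| * Real.exp (-ω ^ 2 / 2) := by
        rw [calI]
        refine (norm_integral_le_integral_norm _).trans_eq ?_
        simp_rw [norm_calI_integrand]
    _ ≤ ∫ ω in Ioi (0 : ℝ), c⁻¹ * ∫ z : ℝ,
          ‖(ω : ℂ) + z * I‖ ^ n * Real.exp (-‖(ω : ℂ) + z * I‖ ^ 2 / 2) := by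
        refine integral_mono_of_nonneg (Eventually.of_forall fun ω => by positivity)
          ((integrable_integral_norm_add_mul_I_pow n).const_mul _).integrableOn
          (Eventually.of_forall fun ω => ?_)
        rw [le_inv_mul_iff₀ hc, ← mul_assoc]
        exact sqrt_two_pi_mul_abs_He_mul_exp_le n ω
    _ = _ := by rw [integral_const_mul, integral_Ioi_integral_norm_add_mul_I_pow, hpi]; ring
end

section
/- Let n and M be integers with 0 ≤ n < M, and let t > 0 be real. Define R_{n,M}(t) = 𝓘ₙ(t) + i^{n−1} Σ_{l=⌈n/2⌉}^{⌊(M−1)/2⌋} (2l−1)!!/t^{2l−n+1}, where (−1)!! = 1. Then |R_{n,M}(t)| ≤ √(π/2) · t^{n−M} · 2^{M/2} · Γ(1 + M/2). -/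
open MeasureTheory

/-- `(2l−1)!! = 1·3·⋯·(2l−1)`, with the convention `(−1)!! = 1` (the case `l = 0`). -/
def oddDoubleFactorial (l : ℕ) : ℕ := ∏ i ∈ Finset.range l, (2 * i + 1)

open Polynomial Set Complex
open scoped Nat Real

/-!
Since `Heₙ₊₁(ω) e^{-ω²/2} = -(Heₙ(ω) e^{-ω²/2})'`, integration by parts over `(0, ∞)` gives
`𝓘ₙ₊₁(t) = Heₙ(0) + i t 𝓘ₙ(t)`, where `Heₙ(0)` is `(-1)ᵐ (2m-1)!!` for `n = 2m` and `0` for odd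
`n`. These boundary values are exactly the terms of the sum, so `i t R_{n,M}(t) = R_{n+1,M}(t)`
and hence `|R_{n,M}(t)| = t^{n-M} |𝓘_M(t)|`. Cauchy–Schwarz against `e^{-ω²/2}` on `(0, ∞)`,
with `∫_ℝ He_M² e^{-ω²/2} = √(2π) M!` (integration by parts again) and evenness, bounds
`|𝓘_M(t)|` by `√(π/2) √(M!)`, and `M! ≤ 2^M Γ(1 + M/2)²` by induction in steps of two.
-/

namespace HalfLineHermite

theorem integral_mul_le_sqrt_integral_sq_mul_sqrt_integral_sq {α : Type*} [MeasurableSpace α]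
    {μ : Measure α} {f g : α → ℝ} (hf : 0 ≤ᵐ[μ] f) (hg : 0 ≤ᵐ[μ] g) (hf₂ : MemLp f 2 μ)
    (hg₂ : MemLp g 2 μ) :
    ∫ a, f a * g a ∂μ ≤ √(∫ a, f a ^ 2 ∂μ) * √(∫ a, g a ^ 2 ∂μ) := by
  have h := integral_mul_le_Lp_mul_Lq_of_nonneg Real.HolderConjugate.two_two hf hg
    (by simpa using hf₂) (by simpa using hg₂)
  simpa only [Real.sqrt_eq_rpow, Real.rpow_two, one_div] using h

noncomputable def gaussianMul (p : ℤ[X]) (x : ℝ) : ℝ := aeval x p * Real.exp (-x ^ 2 / 2)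

lemma gaussianMul_sub (p q : ℤ[X]) :
    gaussianMul (p - q) = gaussianMul p - gaussianMul q := by
  funext x
  simp only [Pi.sub_apply, gaussianMul, map_sub, sub_mul]

lemma continuous_gaussianMul (p : ℤ[X]) : Continuous (gaussianMul p) := by
  unfold gaussianMul
  fun_prop

lemma hasDerivAt_gaussianMul (p : ℤ[X]) (x : ℝ) :
    HasDerivAt (gaussianMul p) (gaussianMul (derivative p - X * p) x) x := by
  have hexp : HasDerivAt (fun x : ℝ => Real.exp (-x ^ 2 / 2)) (-x * Real.exp (-x ^ 2 / 2)) x := by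
    have h : HasDerivAt (fun x : ℝ => -x ^ 2 / 2) (-((2 : ℕ) * x ^ (2 - 1)) / 2) x :=
      (hasDerivAt_pow 2 x).neg.div_const 2
    convert h.exp using 1
    ring
  refine ((p.hasDerivAt_aeval x).mul hexp).congr_deriv ?_
  simp only [gaussianMul, map_sub, map_mul, aeval_X]
  ring

lemma integrable_gaussianMul (p : ℤ[X]) : Integrable (gaussianMul p) := by
  induction p using Polynomial.induction_on' with
  | add p q hp hq =>
    refine (hp.add hq).congr (ae_of_all _ fun x => ?_)
    simp only [Pi.add_apply, gaussianMul, map_add, add_mul]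
  | monomial n a =>
    have h := (integrable_rpow_mul_exp_neg_mul_sq (b := 1 / 2) (by norm_num)
      (s := n) (by linarith [n.cast_nonneg (α := ℝ)])).const_mul (a : ℝ)
    refine h.congr (ae_of_all _ fun x => ?_)
    simp only [gaussianMul, aeval_monomial, algebraMap_int_eq, eq_intCast, Real.rpow_natCast]
    ring_nf

lemma integral_gaussianMul_derivative_sub (p : ℤ[X]) :
    ∫ x, gaussianMul (derivative p - X * p) x = 0 :=
  integral_eq_zero_of_hasDerivAt_of_integrable (hasDerivAt_gaussianMul p)
    (integrable_gaussianMul _) (integrable_gaussianMul p)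

lemma He_eq_aeval (n : ℕ) (x : ℝ) : He n x = aeval x (hermite n) := by
  rw [hermite_eq_deriv_gaussian', He, iteratedDeriv_eq_iterate]
  simp only [neg_div]
  ring

lemma He_neg (n : ℕ) (x : ℝ) : He n (-x) = (-1) ^ n * He n x := by
  have hderiv := iteratedDeriv_comp_neg n (fun y : ℝ => Real.exp (-(y ^ 2) / 2)) (-x)
  simp only [neg_sq, neg_neg, smul_eq_mul] at hderiv
  simp only [He, neg_sq, hderiv]
  ring

lemma oddDoubleFactorial_eq (l : ℕ) : oddDoubleFactorial l = (2 * l - 1)‼ := by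
  cases l with
  | zero => rfl
  | succ k =>
    rw [oddDoubleFactorial, Finset.prod_range_succ', show 2 * (k + 1) - 1 = 2 * k + 1 by omega,
      Nat.doubleFactorial_eq_prod_odd]
    simp

lemma aeval_zero_hermite_two_mul (m : ℕ) :
    aeval (0 : ℝ) (hermite (2 * m)) = (-1) ^ m * oddDoubleFactorial m := by
  rw [← coeff_zero_eq_aeval_zero', ← add_zero (2 * m), coeff_hermite_explicit,
    oddDoubleFactorial_eq]
  simp

lemma aeval_zero_hermite_two_mul_add_one (m : ℕ) : aeval (0 : ℝ) (hermite (2 * m + 1)) = 0 := by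
  rw [← coeff_zero_eq_aeval_zero', coeff_hermite_of_odd_add (by simp), map_zero]

lemma integral_gaussianMul_mul_hermite (u : ℤ[X]) (j : ℕ) :
    ∫ x, gaussianMul (u * hermite j) x = ∫ x, gaussianMul (derivative^[j] u) x := by
  induction j generalizing u with
  | zero => simp
  | succ j ih =>
    have hsplit : u * hermite (j + 1) =
        derivative u * hermite j - (derivative (u * hermite j) - X * (u * hermite j)) := by
      rw [hermite_succ, derivative_mul]
      ring
    rw [hsplit, gaussianMul_sub]
    simp only [Pi.sub_apply]
    rw [integral_sub (integrable_gaussianMul _) (integrable_gaussianMul _),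
      integral_gaussianMul_derivative_sub, sub_zero, ih, Function.iterate_succ_apply]

lemma iterate_derivative_hermite_self (n : ℕ) : derivative^[n] (hermite n) = C (n ! : ℤ) := by
  have hdeg := natDegree_iterate_derivative (hermite n) n
  rw [natDegree_hermite, Nat.sub_self, Nat.le_zero] at hdeg
  rw [eq_C_of_natDegree_eq_zero hdeg,
    coeff_iterate_derivative, zero_add, coeff_hermite_self, Nat.descFactorial_self]
  simp

lemma integral_gaussianMul_hermite_mul_self (n : ℕ) :
    ∫ x, gaussianMul (hermite n * hermite n) x = √(2 * π) * n ! := by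
  have hgauss : ∫ x : ℝ, Real.exp (-x ^ 2 / 2) = √(2 * π) := by
    convert integral_gaussian (1 / 2) using 3 <;> ring_nf
  rw [integral_gaussianMul_mul_hermite, iterate_derivative_hermite_self]
  simp only [gaussianMul, map_natCast]
  rw [integral_const_mul, hgauss, mul_comm]

lemma gaussianMul_hermite_mul_self_abs (n : ℕ) (x : ℝ) :
    gaussianMul (hermite n * hermite n) |x| = gaussianMul (hermite n * hermite n) x := by
  rcases abs_choice x with h | h
  · rw [h]
  · have hsign : ((-1 : ℝ) ^ n) ^ 2 = 1 := by rw [← pow_mul, mul_comm, pow_mul]; norm_num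
    simp only [h, gaussianMul, map_mul, ← He_eq_aeval, He_neg, neg_sq]
    linear_combination (He n x ^ 2 * Real.exp (-x ^ 2 / 2)) * hsign

lemma integral_Ioi_gaussianMul_hermite_mul_self (n : ℕ) :
    ∫ x in Ioi 0, gaussianMul (hermite n * hermite n) x = √(2 * π) * n ! / 2 := by
  have h := integral_comp_abs (f := gaussianMul (hermite n * hermite n))
  simp only [gaussianMul_hermite_mul_self_abs, integral_gaussianMul_hermite_mul_self] at h
  linarith

lemma norm_gaussianMul_mul_cexp (p : ℤ[X]) (t ω : ℝ) :
    ‖(gaussianMul p ω : ℂ) * exp (I * t * ω)‖ = |gaussianMul p ω| := by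
  rw [norm_mul, norm_real, Real.norm_eq_abs,
    show I * t * ω = ((t * ω : ℝ) : ℂ) * I by push_cast; ring, norm_exp_ofReal_mul_I, mul_one]

lemma integrable_gaussianMul_mul_cexp (p : ℤ[X]) (t : ℝ) :
    Integrable fun ω : ℝ => (gaussianMul p ω : ℂ) * exp (I * t * ω) := by
  refine (integrable_gaussianMul p).abs.mono' ?_
    (ae_of_all _ fun ω => (norm_gaussianMul_mul_cexp p t ω).le)
  exact ((continuous_ofReal.comp (continuous_gaussianMul p)).mul (by fun_prop)).aestronglyMeasurable

lemma hasDerivAt_gaussianMul_mul_cexp (p : ℤ[X]) (t ω : ℝ) :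
    HasDerivAt (fun ω : ℝ => (gaussianMul p ω : ℂ) * exp (I * t * ω))
      ((gaussianMul (derivative p - X * p) ω : ℂ) * exp (I * t * ω) +
        I * t * ((gaussianMul p ω : ℂ) * exp (I * t * ω))) ω := by
  have hlin : HasDerivAt (fun ω : ℝ => I * t * (ω : ℂ)) (I * t) ω := by
    simpa using (ofRealCLM.hasDerivAt (x := ω)).const_mul (I * t)
  refine ((hasDerivAt_gaussianMul p ω).ofReal_comp.mul hlin.cexp).congr_deriv ?_
  ring

lemma setIntegral_Ioi_gaussianMul_derivative_sub_mul_cexp (p : ℤ[X]) (t : ℝ) :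
    ∫ ω in Ioi 0, (gaussianMul (derivative p - X * p) ω : ℂ) * exp (I * t * ω) =
      -(aeval (0 : ℝ) p : ℂ) - I * t * ∫ ω in Ioi 0, (gaussianMul p ω : ℂ) * exp (I * t * ω) := by
  have hderiv := hasDerivAt_gaussianMul_mul_cexp p t
  have hint := (integrable_gaussianMul_mul_cexp (derivative p - X * p) t).add
    ((integrable_gaussianMul_mul_cexp p t).const_mul (I * t))
  have hftc := integral_Ioi_of_hasDerivAt_of_tendsto' (a := 0) (fun ω _ => hderiv ω)
    hint.integrableOn (tendsto_zero_of_hasDerivAt_of_integrableOn_Ioi (a := 0) (fun ω _ => hderiv ω)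
      hint.integrableOn (integrable_gaussianMul_mul_cexp p t).integrableOn)
  rw [integral_add (integrable_gaussianMul_mul_cexp _ t).integrableOn
    ((integrable_gaussianMul_mul_cexp p t).const_mul _).integrableOn, integral_const_mul] at hftc
  have h0 : gaussianMul p 0 = aeval (0 : ℝ) p := by simp [gaussianMul]
  simp only [ofReal_zero, mul_zero, exp_zero, mul_one, zero_sub, h0] at hftc
  linear_combination hftc

lemma calI_eq_setIntegral (n : ℕ) (t : ℝ) :
    calI n t = ∫ ω in Ioi 0, (gaussianMul (hermite n) ω : ℂ) * exp (I * t * ω) := by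
  refine integral_congr_ae (ae_of_all _ fun ω => ?_)
  simp only [gaussianMul, He_eq_aeval]
  push_cast
  ring_nf

lemma calI_succ (n : ℕ) (t : ℝ) :
    calI (n + 1) t = aeval (0 : ℝ) (hermite n) + I * t * calI n t := by
  have h := setIntegral_Ioi_gaussianMul_derivative_sub_mul_cexp (hermite n) t
  rw [show derivative (hermite n) - X * hermite n = -hermite (n + 1) by rw [hermite_succ]; ring,
    ← calI_eq_setIntegral] at h
  rw [calI_eq_setIntegral, ← neg_neg (∫ _ in _, _), ← integral_neg]
  simp only [gaussianMul, map_neg, neg_mul, ofReal_neg] at h ⊢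
  rw [h]
  ring

lemma setIntegral_Ioi_abs_gaussianMul_le (p : ℤ[X]) :
    ∫ x in Ioi 0, |gaussianMul p x| ≤
      √(∫ x in Ioi 0, gaussianMul (p * p) x) * √(∫ x in Ioi 0, Real.exp (-x ^ 2 / 2)) := by
  set f : ℝ → ℝ := fun x => |aeval x p| * Real.exp (-x ^ 2 / 4)
  set g : ℝ → ℝ := fun x => Real.exp (-x ^ 2 / 4)
  have hg_sq (x : ℝ) : g x ^ 2 = Real.exp (-x ^ 2 / 2) := by
    rw [← Real.exp_nat_mul]; ring_nf
  have hf_sq (x : ℝ) : f x ^ 2 = gaussianMul (p * p) x := by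
    rw [mul_pow, sq_abs, hg_sq, gaussianMul, map_mul, sq]
  have hfg (x : ℝ) : f x * g x = |gaussianMul p x| := by
    simp only [f, g, mul_assoc, ← sq, hg_sq, gaussianMul, abs_mul, Real.abs_exp]
  have hf₂ : MemLp f 2 (volume.restrict (Ioi 0)) := by
    refine (memLp_two_iff_integrable_sq (Continuous.aestronglyMeasurable (by fun_prop))).2 ?_
    exact (integrable_gaussianMul (p * p)).restrict.congr (ae_of_all _ fun x => (hf_sq x).symm)
  have hg₂ : MemLp g 2 (volume.restrict (Ioi 0)) := by
    refine (memLp_two_iff_integrable_sq (Continuous.aestronglyMeasurable (by fun_prop))).2 ?_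
    refine (integrable_gaussianMul 1).restrict.congr (ae_of_all _ fun x => ?_)
    simp only [hg_sq, gaussianMul, map_one, one_mul]
  have h := integral_mul_le_sqrt_integral_sq_mul_sqrt_integral_sq
    (ae_of_all _ fun x => by positivity) (ae_of_all _ fun x => by positivity) hf₂ hg₂
  simpa only [hfg, hf_sq, hg_sq] using h

lemma norm_calI_le (n : ℕ) (t : ℝ) : ‖calI n t‖ ≤ √(π / 2) * √(n ! : ℝ) := by
  have hgauss : ∫ x in Ioi (0 : ℝ), Real.exp (-x ^ 2 / 2) = √(2 * π) / 2 := by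
    convert integral_gaussian_Ioi (1 / 2) using 3 <;> ring_nf
  calc ‖calI n t‖ ≤ ∫ ω in Ioi 0, |gaussianMul (hermite n) ω| := by
        rw [calI_eq_setIntegral]
        refine (norm_integral_le_integral_norm _).trans_eq ?_
        simp only [norm_gaussianMul_mul_cexp]
    _ ≤ √(√(2 * π) * n ! / 2) * √(√(2 * π) / 2) := by
        simpa only [integral_Ioi_gaussianMul_hermite_mul_self, hgauss]
          using setIntegral_Ioi_abs_gaussianMul_le (hermite n)
    _ = √(π / 2) * √(n ! : ℝ) := by
        rw [← Real.sqrt_mul (by positivity), ← Real.sqrt_mul (by positivity)]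
        congr 1
        linear_combination (n ! / 4 : ℝ) * Real.mul_self_sqrt (by positivity : 0 ≤ 2 * π)

lemma factorial_le_two_pow_mul_Gamma_sq :
    ∀ n : ℕ, (n ! : ℝ) ≤ 2 ^ n * Real.Gamma (1 + n / 2) ^ 2
  | 0 => by simp
  | 1 => by
    have hΓ : Real.Gamma (1 + (1 : ℕ) / 2) = √π / 2 := by
      rw [show (1 : ℝ) + (1 : ℕ) / 2 = 1 / 2 + 1 by norm_num, Real.Gamma_add_one (by norm_num),
        Real.Gamma_one_half_eq]
      ring
    rw [hΓ, div_pow, Real.sq_sqrt Real.pi_pos.le]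
    norm_num
    linarith [Real.pi_gt_three]
  | n + 2 => by
    have ih := factorial_le_two_pow_mul_Gamma_sq n
    have hΓ : Real.Gamma (1 + ((n + 2 : ℕ) : ℝ) / 2) = (1 + n / 2) * Real.Gamma (1 + n / 2) := by
      rw [← Real.Gamma_add_one (by positivity)]
      push_cast
      ring_nf
    calc ((n + 2) ! : ℝ) = (n + 2) * (n + 1) * n ! := by
          push_cast [Nat.factorial_succ]; ring
      _ ≤ (n + 2) * (n + 1) * (2 ^ n * Real.Gamma (1 + n / 2) ^ 2) := by gcongr
      _ ≤ (n + 2) * (n + 2) * (2 ^ n * Real.Gamma (1 + n / 2) ^ 2) := by gcongr; linarith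
      _ = 2 ^ (n + 2) * Real.Gamma (1 + ((n + 2 : ℕ) : ℝ) / 2) ^ 2 := by rw [hΓ]; ring

lemma sqrt_factorial_le (n : ℕ) : √(n ! : ℝ) ≤ 2 ^ ((n : ℝ) / 2) * Real.Gamma (1 + n / 2) := by
  have hΓ : 0 ≤ Real.Gamma (1 + n / 2) := (Real.Gamma_pos_of_pos (by positivity)).le
  have h2 : (2 : ℝ) ^ ((n : ℝ) / 2) = √(2 ^ n) := by
    rw [Real.sqrt_eq_rpow, ← Real.rpow_natCast, ← Real.rpow_mul (by norm_num)]
    ring_nf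
  rw [h2, ← Real.sqrt_sq hΓ, ← Real.sqrt_mul (by positivity)]
  exact Real.sqrt_le_sqrt (factorial_le_two_pow_mul_Gamma_sq n)

lemma norm_calI_le_Gamma (M : ℕ) (t : ℝ) :
    ‖calI M t‖ ≤ √(π / 2) * (2 : ℝ) ^ ((M : ℝ) / 2) * Real.Gamma (1 + (M : ℝ) / 2) := by
  rw [mul_assoc]
  exact (norm_calI_le M t).trans (mul_le_mul_of_nonneg_left (sqrt_factorial_le M) (by positivity))

section Remainder

variable (t : ℝ)

/-- The summand `i^{n-1} (2l-1)!! / t^{2l-n+1}` with an integer exponent, so that multiplying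
by `i t` just shifts `n`; `remainder t ((M - 1) / 2) n` is then `R_{n,M}(t)`. -/
noncomputable def remainderTerm (n l : ℕ) : ℂ :=
  I ^ ((n : ℤ) - 1) * oddDoubleFactorial l * (t : ℂ) ^ ((n : ℤ) - 2 * l - 1)

noncomputable def remainder (K n : ℕ) : ℂ :=
  calI n t + ∑ l ∈ Finset.Icc ((n + 1) / 2) K, remainderTerm t n l

variable {t}

lemma remainderTerm_eq {n l : ℕ} (h : n ≤ 2 * l) :
    remainderTerm t n l =
      I ^ ((n : ℤ) - 1) * (oddDoubleFactorial l / (t : ℂ) ^ (2 * l - n + 1)) := by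
  rw [remainderTerm, mul_assoc, div_eq_mul_inv, ← zpow_natCast, ← zpow_neg]
  congr 3
  push_cast [h]
  ring

lemma calI_add_sum_eq_remainder (K n : ℕ) :
    calI n t + I ^ ((n : ℤ) - 1) * ∑ l ∈ Finset.Icc ((n + 1) / 2) K,
        (oddDoubleFactorial l : ℂ) / (t : ℂ) ^ (2 * l - n + 1) = remainder t K n := by
  rw [remainder, Finset.mul_sum]
  refine congrArg _ (Finset.sum_congr rfl fun l hl => (remainderTerm_eq ?_).symm)
  have := (Finset.mem_Icc.1 hl).1
  omega

lemma I_mul_remainderTerm (ht : t ≠ 0) (n l : ℕ) :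
    I * t * remainderTerm t n l = remainderTerm t (n + 1) l := by
  have ht' : (t : ℂ) ≠ 0 := ofReal_ne_zero.2 ht
  rw [remainderTerm, remainderTerm, show ((n + 1 : ℕ) : ℤ) - 1 = (n - 1) + 1 by push_cast; ring,
    show ((n + 1 : ℕ) : ℤ) - 2 * l - 1 = (n - 2 * l - 1) + 1 by push_cast; ring,
    zpow_add_one₀ I_ne_zero, zpow_add_one₀ ht']
  ring

lemma remainderTerm_two_mul_add_one_self (m : ℕ) :
    remainderTerm t (2 * m + 1) m = aeval (0 : ℝ) (hermite (2 * m)) := by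
  rw [remainderTerm, aeval_zero_hermite_two_mul,
    show ((2 * m + 1 : ℕ) : ℤ) - 1 = ((2 * m : ℕ) : ℤ) by push_cast; ring,
    show ((2 * m + 1 : ℕ) : ℤ) - 2 * m - 1 = 0 by push_cast; ring, zpow_zero, zpow_natCast,
    pow_mul, I_sq]
  push_cast
  ring

lemma sum_remainderTerm_succ {K n : ℕ} (hn : n ≤ 2 * K + 1) :
    ∑ l ∈ Finset.Icc ((n + 1) / 2) K, remainderTerm t (n + 1) l =
      aeval (0 : ℝ) (hermite n) +
        ∑ l ∈ Finset.Icc ((n + 1 + 1) / 2) K, remainderTerm t (n + 1) l := by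
  obtain ⟨m, rfl | rfl⟩ := Nat.even_or_odd' n
  · rw [show (2 * m + 1) / 2 = m by omega, show (2 * m + 1 + 1) / 2 = m + 1 by omega,
      ← Finset.insert_Icc_add_one_left_eq_Icc (by omega : m ≤ K),
      Finset.sum_insert (by simp), remainderTerm_two_mul_add_one_self]
  · rw [show (2 * m + 1 + 1 + 1) / 2 = (2 * m + 1 + 1) / 2 by omega,
      aeval_zero_hermite_two_mul_add_one, ofReal_zero, zero_add]

lemma I_mul_remainder (ht : t ≠ 0) {K n : ℕ} (hn : n ≤ 2 * K + 1) :
    I * t * remainder t K n = remainder t K (n + 1) := by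
  rw [remainder, mul_add, Finset.mul_sum]
  simp only [I_mul_remainderTerm ht]
  rw [sum_remainderTerm_succ hn, remainder, calI_succ]
  ring

lemma I_mul_pow_mul_remainder (ht : t ≠ 0) {K : ℕ} :
    ∀ d n : ℕ, n + d ≤ 2 * K + 2 → (I * t) ^ d * remainder t K n = remainder t K (n + d)
  | 0, n, _ => by simp
  | d + 1, n, h => by
    rw [pow_succ, mul_assoc, I_mul_remainder ht (by omega),
      I_mul_pow_mul_remainder ht d (n + 1) (by omega), add_right_comm, add_assoc]

lemma remainder_eq_calI {K n : ℕ} (h : K < (n + 1) / 2) : remainder t K n = calI n t := by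
  rw [remainder, Finset.Icc_eq_empty (by omega), Finset.sum_empty, add_zero]

lemma norm_remainder_eq (ht : 0 < t) {n M : ℕ} (hnM : n < M) :
    ‖remainder t ((M - 1) / 2) n‖ = t ^ ((n : ℤ) - M) * ‖calI M t‖ := by
  have h := I_mul_pow_mul_remainder ht.ne' (M - n) n (K := (M - 1) / 2) (by omega)
  rw [Nat.add_sub_cancel' hnM.le, remainder_eq_calI (n := M) (by omega)] at h
  rw [← h, norm_mul, norm_pow, norm_mul, norm_I, one_mul, norm_real, Real.norm_of_nonneg ht.le,
    ← mul_assoc, ← zpow_natCast, ← zpow_add₀ ht.ne', Nat.cast_sub hnM.le]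
  ring_nf
  rw [zpow_zero, one_mul]

end Remainder

end HalfLineHermite

theorem stmt_1 (n M : ℕ) (hnM : n < M) (t : ℝ) (ht : 0 < t) :
    ‖calI n t + Complex.I ^ ((n : ℤ) - 1) *
        ∑ l ∈ Finset.Icc ((n + 1) / 2) ((M - 1) / 2),
          (oddDoubleFactorial l : ℂ) / (t : ℂ) ^ (2 * l - n + 1)‖ ≤
      Real.sqrt (Real.pi / 2) * t ^ ((n : ℤ) - (M : ℤ)) * (2 : ℝ) ^ ((M : ℝ) / 2) *
        Real.Gamma (1 + (M : ℝ) / 2) := by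
  rw [HalfLineHermite.calI_add_sum_eq_remainder, HalfLineHermite.norm_remainder_eq ht hnM]
  calc t ^ ((n : ℤ) - M) * ‖calI M t‖
      ≤ t ^ ((n : ℤ) - M) * (√(π / 2) * 2 ^ ((M : ℝ) / 2) * Real.Gamma (1 + (M : ℝ) / 2)) := by
        gcongr
        exact HalfLineHermite.norm_calI_le_Gamma M t
    _ = _ := by ring
end

section
/- For all real t and x with t > x > 0, the improper integral ∫₀^∞ sin(ωt) J₀(ωx) dω converges and equals 1/√(t² − x²); that is, lim_{A→∞} ∫₀^A sin(ωt) J₀(ωx) dω = 1/√(t² − x²). -/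
/-!
Write `J₀` as an average over `φ ∈ [0, π]` and integrate in `ω` first. Since
`2 sin(ωt) cos(ωa) = sin(ω(t + a)) + sin(ω(t - a))`, the inner integral with `a = x sin φ` is
`t / (t² - x² sin² φ)` minus the two oscillating terms `cos(A(t ± x sin φ)) / (2(t ± x sin φ))`.
The first part integrates over `[0, π]` to `π / √(t² - x²)` (an elementary arctan primitive).
After the substitution `u = sin φ` each oscillating term becomes `∫₀¹ cos(A(t ± xu)) w(u) du`
with the integrable weight `w(u) = 1 / ((t ± xu) √(1 - u²))`, so it tends to `0` by the
Riemann–Lebesgue lemma.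
-/

open MeasureTheory

/-- Bessel function of the first kind of order 0: `J₀(x) = (1/π)∫₀^π cos(x sin φ) dφ`. -/
noncomputable def J0 (x : ℝ) : ℝ :=
  (1 / Real.pi) * ∫ φ in (0 : ℝ)..Real.pi, Real.cos (x * Real.sin φ)

open Real Filter Set Topology

theorem add_mul_sin_pos {t b : ℝ} (hbt : |b| < t) (φ : ℝ) : 0 < t + b * sin φ := by
  have : |b * sin φ| ≤ |b| := by
    rw [abs_mul]
    exact mul_le_of_le_one_right (abs_nonneg b) (abs_sin_le_one φ)
  linarith [neg_abs_le (b * sin φ)]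

theorem integral_sin_mul_cos {t a : ℝ} (h₁ : t + a ≠ 0) (h₂ : t - a ≠ 0) (A : ℝ) :
    ∫ ω in 0..A, sin (ω * t) * cos (ω * a) =
      t / (t ^ 2 - a ^ 2) - cos (A * (t + a)) / (t + a) / 2 - cos (A * (t - a)) / (t - a) / 2 := by
  have hsin : ∀ r ≠ 0, ∫ ω in 0..A, sin (ω * r) = (1 - cos (A * r)) / r := fun r hr => by
    rw [intervalIntegral.integral_comp_mul_right sin hr, integral_sin]
    simp only [zero_mul, cos_zero, smul_eq_mul]
    field_simp
  have hprod : ∀ ω, sin (ω * t) * cos (ω * a) = (sin (ω * (t + a)) + sin (ω * (t - a))) / 2 :=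
    fun ω => by rw [mul_add, mul_sub, sin_add, sin_sub]; ring
  simp_rw [hprod]
  rw [intervalIntegral.integral_div, intervalIntegral.integral_add
      ((by fun_prop : Continuous _).intervalIntegrable _ _)
      ((by fun_prop : Continuous _).intervalIntegrable _ _),
    hsin _ h₁, hsin _ h₂, show t ^ 2 - a ^ 2 = (t + a) * (t - a) by ring]
  field_simp
  ring

theorem integral_sin_mul_J0 (t x A : ℝ) :
    ∫ ω in 0..A, sin (ω * t) * J0 (ω * x) =
      π⁻¹ * ∫ φ in 0..π, ∫ ω in 0..A, sin (ω * t) * cos (ω * (x * sin φ)) := by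
  have hJ : ∀ ω, sin (ω * t) * J0 (ω * x) =
      π⁻¹ * ∫ φ in 0..π, sin (ω * t) * cos (ω * (x * sin φ)) := fun ω => by
    rw [J0, one_div, mul_left_comm, ← intervalIntegral.integral_const_mul]
    simp only [mul_assoc]
  simp_rw [hJ]
  rw [intervalIntegral.integral_const_mul]
  congr 1
  have hcont : Continuous fun p : ℝ × ℝ => sin (p.1 * t) * cos (p.1 * (x * sin p.2)) := by
    fun_prop
  exact intervalIntegral_intervalIntegral_swap
    (hcont.continuousOn.integrableOn_compact (isCompact_uIcc.prod isCompact_uIcc)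
      |>.mono_set (prod_mono uIoc_subset_uIcc uIoc_subset_uIcc))

theorem cos_sq_add_mul_sin_sq_pos {k : ℝ} (hk : 0 < k) (φ : ℝ) :
    0 < cos φ ^ 2 + k * sin φ ^ 2 := by
  rcases le_or_gt k 1 with h | h
  · nlinarith [sin_sq_add_cos_sq φ, mul_nonneg (sub_nonneg.mpr h) (sq_nonneg (cos φ))]
  · nlinarith [sin_sq_add_cos_sq φ, mul_nonneg (sub_nonneg.mpr h.le) (sq_nonneg (sin φ))]

/- By the tangent subtraction formula this primitive agrees with `arctan (k tan φ)` up to a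
multiple of `π`, but unlike the latter it is smooth on all of `ℝ`. -/
theorem hasDerivAt_add_arctan {k : ℝ} (hk : 0 < k) (φ : ℝ) :
    HasDerivAt (fun φ => φ + arctan ((k - 1) * sin φ * cos φ / (cos φ ^ 2 + k * sin φ ^ 2)))
      (k / (cos φ ^ 2 + k ^ 2 * sin φ ^ 2)) φ := by
  have hD := cos_sq_add_mul_sin_sq_pos hk φ
  have hD₂ := cos_sq_add_mul_sin_sq_pos (pow_pos hk 2) φ
  refine ((hasDerivAt_id φ).add ((((hasDerivAt_sin φ).const_mul (k - 1)).mul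
    (hasDerivAt_cos φ)).div (((hasDerivAt_cos φ).pow 2).add
      (((hasDerivAt_sin φ).pow 2).const_mul k)) hD.ne').arctan).congr_deriv ?_
  simp only [Pi.mul_apply, Pi.div_apply, Pi.add_apply, Pi.pow_apply, Nat.cast_ofNat,
    Nat.add_one_sub_one, pow_one]
  field_simp
  linear_combination k * (cos φ ^ 2 + k ^ 2 * sin φ ^ 2) * (sin φ ^ 2 + cos φ ^ 2) *
    sin_sq_add_cos_sq φ

theorem integral_div_cos_sq_add_sq_mul_sin_sq {k : ℝ} (hk : 0 < k) :
    ∫ φ in 0..π, k / (cos φ ^ 2 + k ^ 2 * sin φ ^ 2) = π := by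
  have hcont : Continuous fun φ => k / (cos φ ^ 2 + k ^ 2 * sin φ ^ 2) :=
    continuous_const.div (by fun_prop) fun φ => (cos_sq_add_mul_sin_sq_pos (pow_pos hk 2) φ).ne'
  rw [intervalIntegral.integral_eq_sub_of_hasDerivAt (fun φ _ => hasDerivAt_add_arctan hk φ)
    (hcont.intervalIntegrable _ _)]
  simp

theorem integral_div_sq_sub_sq_mul_sin_sq {t x : ℝ} (hxt : |x| < t) :
    ∫ φ in 0..π, t / (t ^ 2 - (x * sin φ) ^ 2) = π / √(t ^ 2 - x ^ 2) := by
  have ht : 0 < t := (abs_nonneg x).trans_lt hxt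
  have hc2 : 0 < t ^ 2 - x ^ 2 := by nlinarith [sq_abs x, abs_nonneg x]
  set c := √(t ^ 2 - x ^ 2)
  have hc : 0 < c := sqrt_pos.mpr hc2
  have hcsq : c ^ 2 = t ^ 2 - x ^ 2 := sq_sqrt hc2.le
  have hk : 0 < c / t := div_pos hc ht
  have heq : ∀ φ, t / (t ^ 2 - (x * sin φ) ^ 2)
      = c⁻¹ * (c / t / (cos φ ^ 2 + (c / t) ^ 2 * sin φ ^ 2)) := fun φ => by
    have hden : t ^ 2 - (x * sin φ) ^ 2 = t ^ 2 * (cos φ ^ 2 + (c / t) ^ 2 * sin φ ^ 2) := by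
      field_simp
      linear_combination -(sin φ ^ 2) * hcsq - t ^ 2 * sin_sq_add_cos_sq φ
    rw [hden]
    field_simp
  simp_rw [heq]
  rw [intervalIntegral.integral_const_mul, integral_div_cos_sq_add_sq_mul_sin_sq hk,
    inv_mul_eq_div]

theorem integral_sin_mul_J0_eq {t x : ℝ} (hxt : |x| < t) (A : ℝ) :
    ∫ ω in 0..A, sin (ω * t) * J0 (ω * x) =
      π⁻¹ * (π / √(t ^ 2 - x ^ 2)
        - (∫ φ in 0..π, cos (A * (t + x * sin φ)) / (t + x * sin φ)) / 2
        - (∫ φ in 0..π, cos (A * (t - x * sin φ)) / (t - x * sin φ)) / 2) := by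
  have hadd := add_mul_sin_pos hxt
  have hsub : ∀ φ, 0 < t - x * sin φ := by
    simpa [sub_eq_add_neg] using add_mul_sin_pos (b := -x) (by rwa [abs_neg])
  have hinner : ∀ φ, ∫ ω in 0..A, sin (ω * t) * cos (ω * (x * sin φ)) =
      t / (t ^ 2 - (x * sin φ) ^ 2) - cos (A * (t + x * sin φ)) / (t + x * sin φ) / 2
        - cos (A * (t - x * sin φ)) / (t - x * sin φ) / 2 :=
    fun φ => integral_sin_mul_cos (hadd φ).ne' (hsub φ).ne' A
  have hcont₀ : Continuous fun φ => t / (t ^ 2 - (x * sin φ) ^ 2) :=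
    continuous_const.div (by fun_prop) fun φ => by
      rw [sq_sub_sq]
      exact (mul_pos (hadd φ) (hsub φ)).ne'
  have hcont₁ : Continuous fun φ => cos (A * (t + x * sin φ)) / (t + x * sin φ) / 2 :=
    (Continuous.div (by fun_prop) (by fun_prop) fun φ => (hadd φ).ne').div_const 2
  have hcont₂ : Continuous fun φ => cos (A * (t - x * sin φ)) / (t - x * sin φ) / 2 :=
    (Continuous.div (by fun_prop) (by fun_prop) fun φ => (hsub φ).ne').div_const 2
  rw [integral_sin_mul_J0, ← integral_div_sq_sub_sq_mul_sin_sq hxt]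
  simp_rw [hinner]
  rw [intervalIntegral.integral_sub
      (((hcont₀.sub hcont₁).intervalIntegrable _ _ : IntervalIntegrable (fun φ => _ - _) _ _ _))
      (hcont₂.intervalIntegrable _ _),
    intervalIntegral.integral_sub (hcont₀.intervalIntegrable _ _) (hcont₁.intervalIntegrable _ _),
    intervalIntegral.integral_div, intervalIntegral.integral_div]

theorem tendsto_setIntegral_cos_add_mul {α : Type*} {l : Filter α} {θ ξ : α → ℝ}
    {w : ℝ → ℝ} {S : Set ℝ} (hS : MeasurableSet S) (hw : IntegrableOn w S)
    (hξ : Tendsto ξ l (cocompact ℝ)) :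
    Tendsto (fun a => ∫ u in S, cos (θ a + ξ a * u) * w u) l (𝓝 0) := by
  set F : ℝ → ℂ := fun η => ∫ u in S, Complex.exp (↑(η * u) * Complex.I) * w u
  -- Mathlib's Riemann–Lebesgue lemma for `1_S w`, rescaled from `𝐞 (-(u η))` to `exp (i η u)`
  have hRL : Tendsto F (cocompact ℝ) (𝓝 0) := by
    refine ((Real.tendsto_integral_exp_smul_cocompact (S.indicator fun u => (w u : ℂ))).comp
      (tendsto_cocompact_mul_right₀ (a := -(2 * π)⁻¹) (by simp [pi_ne_zero]))).congr fun η => ?_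
    simp only [Function.comp_apply, F]
    rw [← integral_indicator hS]
    congr 1 with u
    by_cases hu : u ∈ S
    · simp only [indicator_of_mem hu, Real.fourierChar_apply, Circle.smul_def]
      congr 2
      push_cast
      field_simp
    · simp [indicator_of_notMem hu]
  have hle : ∀ a, ‖∫ u in S, cos (θ a + ξ a * u) * w u‖ ≤ ‖F (ξ a)‖ := fun a => by
    have hcos : ∀ u, cos (θ a + ξ a * u) * w u = RCLike.re
        (Complex.exp (θ a * Complex.I) * (Complex.exp (↑(ξ a * u) * Complex.I) * w u)) := by
      intro u
      rw [RCLike.re_eq_complex_re, ← mul_assoc, ← Complex.exp_add, ← add_mul,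
        ← Complex.ofReal_add, Complex.re_mul_ofReal, Complex.exp_ofReal_mul_I_re]
    have hint : IntegrableOn (fun u => Complex.exp (↑(ξ a * u) * Complex.I) * w u) S :=
      hw.ofReal.bdd_mul (by fun_prop) (c := 1) (.of_forall fun u => by
        rw [Complex.norm_exp_ofReal_mul_I])
    simp_rw [hcos]
    rw [integral_re (hint.const_mul _), integral_const_mul]
    calc _ ≤ ‖Complex.exp (θ a * Complex.I) * F (ξ a)‖ := Complex.abs_re_le_norm _
      _ = ‖F (ξ a)‖ := by rw [norm_mul, Complex.norm_exp_ofReal_mul_I, one_mul]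
  exact squeeze_zero_norm hle (by simpa using (hRL.comp hξ).norm)

theorem image_sin_Ioo_zero_pi_div_two : sin '' Ioo 0 (π / 2) = Ioo 0 1 := by
  simpa using (continuous_sin.continuousOn (s := Icc 0 (π / 2))).image_Ioo_of_strictMonoOn
    (by positivity) (strictMonoOn_sin.mono (Icc_subset_Icc_left (by linarith [pi_pos])))

theorem injOn_sin_Ioo_zero_pi_div_two : InjOn sin (Ioo 0 (π / 2)) :=
  injOn_sin.mono (Ioo_subset_Icc_self.trans (Icc_subset_Icc_left (by linarith [pi_pos])))

theorem abs_cos_smul_div_sqrt_one_sub_sin_sq {φ : ℝ} (hφ : cos φ ≠ 0) (y : ℝ) :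
    |cos φ| • (y / √(1 - sin φ ^ 2)) = y := by
  rw [← abs_cos_eq_sqrt_one_sub_sin_sq, smul_eq_mul, mul_div_cancel₀ _ (abs_ne_zero.mpr hφ)]

theorem cos_ne_zero_of_mem_Ioo_zero_pi_div_two {φ : ℝ} (hφ : φ ∈ Ioo 0 (π / 2)) : cos φ ≠ 0 :=
  (cos_pos_of_mem_Ioo ⟨by linarith [hφ.1, pi_pos], hφ.2⟩).ne'

theorem setIntegral_div_sqrt_one_sub_sq (g : ℝ → ℝ) :
    ∫ u in Ioo 0 1, g u / √(1 - u ^ 2) = ∫ φ in 0..π / 2, g (sin φ) := by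
  rw [← image_sin_Ioo_zero_pi_div_two, integral_image_eq_integral_abs_deriv_smul measurableSet_Ioo
    (fun φ _ => (hasDerivAt_sin φ).hasDerivWithinAt) injOn_sin_Ioo_zero_pi_div_two,
    intervalIntegral.integral_of_le (by positivity), integral_Ioc_eq_integral_Ioo]
  exact setIntegral_congr_fun measurableSet_Ioo fun φ hφ =>
    abs_cos_smul_div_sqrt_one_sub_sin_sq (cos_ne_zero_of_mem_Ioo_zero_pi_div_two hφ) _

theorem integrableOn_div_sqrt_one_sub_sq_iff (g : ℝ → ℝ) :
    IntegrableOn (fun u => g u / √(1 - u ^ 2)) (Ioo 0 1) ↔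
      IntegrableOn (fun φ => g (sin φ)) (Ioo 0 (π / 2)) := by
  rw [← image_sin_Ioo_zero_pi_div_two, integrableOn_image_iff_integrableOn_abs_deriv_smul
    measurableSet_Ioo (fun φ _ => (hasDerivAt_sin φ).hasDerivWithinAt)
    injOn_sin_Ioo_zero_pi_div_two]
  exact integrableOn_congr_fun (fun φ hφ => abs_cos_smul_div_sqrt_one_sub_sin_sq
    (cos_ne_zero_of_mem_Ioo_zero_pi_div_two hφ) _) measurableSet_Ioo

theorem integral_comp_sin_zero_pi {g : ℝ → ℝ} (hg : Continuous fun φ => g (sin φ)) :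
    ∫ φ in 0..π, g (sin φ) = 2 * ∫ φ in 0..π / 2, g (sin φ) := by
  rw [← intervalIntegral.integral_add_adjacent_intervals (b := π / 2)
    (hg.intervalIntegrable _ _) (hg.intervalIntegrable _ _)]
  have hsymm : ∫ φ in π / 2..π, g (sin φ) = ∫ φ in 0..π / 2, g (sin φ) := by
    symm
    simpa [sin_pi_sub, show π - π / 2 = π / 2 by ring] using
      intervalIntegral.integral_comp_sub_left (fun φ => g (sin φ)) π (a := 0) (b := π / 2)
  rw [hsymm, two_mul]

theorem tendsto_integral_cos_mul_div_add_mul_sin {t b : ℝ} (hb : b ≠ 0) (hbt : |b| < t) :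
    Tendsto (fun A => ∫ φ in 0..π, cos (A * (t + b * sin φ)) / (t + b * sin φ)) atTop (𝓝 0) := by
  have hw : IntegrableOn (fun u => (t + b * u)⁻¹ / √(1 - u ^ 2)) (Ioo 0 1) := by
    refine (integrableOn_div_sqrt_one_sub_sq_iff _).2 ?_
    have : Continuous fun φ => (t + b * sin φ)⁻¹ :=
      (by fun_prop : Continuous fun φ => t + b * sin φ).inv₀ fun φ => (add_mul_sin_pos hbt φ).ne'
    exact this.integrableOn_Icc.mono_set Ioo_subset_Icc_self
  have hξ : Tendsto (fun A => A * b) atTop (cocompact ℝ) :=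
    (tendsto_cocompact_mul_right₀ hb).comp (tendsto_id.mono_left atTop_le_cocompact)
  have hlim := (tendsto_setIntegral_cos_add_mul (θ := fun A => A * t) measurableSet_Ioo hw
    hξ).const_mul 2
  rw [mul_zero] at hlim
  refine hlim.congr fun A => ?_
  have hcont : Continuous fun φ => cos (A * (t + b * sin φ)) / (t + b * sin φ) :=
    .div (by fun_prop) (by fun_prop) fun φ => (add_mul_sin_pos hbt φ).ne'
  rw [integral_comp_sin_zero_pi (g := fun u => cos (A * (t + b * u)) / (t + b * u)) hcont,
    ← setIntegral_div_sqrt_one_sub_sq fun u => cos (A * (t + b * u)) / (t + b * u)]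
  congr 1
  refine setIntegral_congr_fun measurableSet_Ioo fun u _ => ?_
  rw [show A * t + A * b * u = A * (t + b * u) by ring]
  ring

theorem stmt_11 (t x : ℝ) (hx : 0 < x) (hxt : x < t) :
    Filter.Tendsto (fun A : ℝ => ∫ ω in (0 : ℝ)..A, Real.sin (ω * t) * J0 (ω * x))
      Filter.atTop (nhds (1 / Real.sqrt (t ^ 2 - x ^ 2))) := by
  have habs : |x| < t := by rwa [abs_of_pos hx]
  have h₁ := tendsto_integral_cos_mul_div_add_mul_sin hx.ne' habs
  have h₂ := tendsto_integral_cos_mul_div_add_mul_sin (neg_ne_zero.2 hx.ne') (by rwa [abs_neg])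
  simp only [neg_mul, ← sub_eq_add_neg] at h₂
  have hlim := (((tendsto_const_nhds (x := π / √(t ^ 2 - x ^ 2))).sub (h₁.div_const 2)).sub
    (h₂.div_const 2)).const_mul π⁻¹
  convert hlim using 1
  · exact funext (integral_sin_mul_J0_eq habs)
  · rw [zero_div, sub_zero, sub_zero, ← mul_div_assoc, inv_mul_cancel₀ pi_ne_zero]
end

section
/- For all real r ≥ 0 and x ≥ 0 there holds ∫₀^∞ ω e^{−ω²/2} J₀(ωr) J₀(ωx) dω = exp(−(r−x)²/2) · e^{−rx} I₀(rx) = exp(−(r²+x²)/2) · I₀(rx). -/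
open MeasureTheory

/-- Modified Bessel function of the first kind of order 0: `I₀(z) = (1/π)∫₀^π e^{z cos φ} dφ`. -/
noncomputable def besselI0 (z : ℝ) : ℝ :=
  (1 / Real.pi) * ∫ φ in (0 : ℝ)..Real.pi, Real.exp (z * Real.cos φ)

/-!
Both sides are `(2π)⁻¹` times the plane integral `F = ∫_{ℝ²} e^{-|u|²/2} J₀(x|u|) cos(r u₁) du`.
In polar coordinates the angular integral of `cos(rρ cos θ)` is `2π J₀(rρ)`, so `F` is `2π` times
the left-hand side. On the other hand `J₀(x|u|)` is the angular average of `cos(x ⟨u, e_θ⟩)`;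
integrating over `u` first, the Fourier transform of the Gaussian turns `cos(r u₁) cos(x ⟨u, e_θ⟩)`
into `π e^{-(r² + x²)/2} (e^{rx cos θ} + e^{-rx cos θ})`, whose angular average is
`2π e^{-(r² + x²)/2} I₀(rx)`.
-/

open Real Set

section GaussianWave

open Complex

-- `e^{-s²/2 + i a s}`; the `+ 0` matches the shape of `integral_cexp_quadratic`.
noncomputable def gaussianWave (a s : ℝ) : ℂ :=
  cexp (-(1 / 2) * s ^ 2 + a * I * s + 0)

lemma integral_gaussianWave (a : ℝ) :
    ∫ s : ℝ, gaussianWave a s = ((√(2 * π) * Real.exp (-a ^ 2 / 2) : ℝ) : ℂ) := by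
  simp only [gaussianWave]
  rw [integral_cexp_quadratic (by norm_num), ofReal_mul, ofReal_exp, sqrt_eq_rpow,
    ofReal_cpow (by positivity)]
  congr 2
  · push_cast; ring
  · push_cast; ring
  · push_cast; ring_nf; rw [I_sq]; ring

lemma re_gaussianWave_mul_gaussianWave (p q : ℝ) (u : ℝ × ℝ) :
    (gaussianWave p u.1 * gaussianWave q u.2).re =
      Real.exp (-(u.1 ^ 2 + u.2 ^ 2) / 2) * Real.cos (p * u.1 + q * u.2) := by
  have h : -(1 / 2) * (u.1 : ℂ) ^ 2 + p * I * u.1 + 0 + (-(1 / 2) * u.2 ^ 2 + q * I * u.2 + 0) =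
      ((-(u.1 ^ 2 + u.2 ^ 2) / 2 : ℝ) : ℂ) + ((p * u.1 + q * u.2 : ℝ) : ℂ) * I := by
    push_cast; ring
  rw [gaussianWave, gaussianWave, ← Complex.exp_add, exp_re, h, add_re, add_im, mul_I_re, mul_I_im,
    ofReal_re, ofReal_im, ofReal_re, ofReal_im, neg_zero, add_zero, zero_add]

lemma integrable_gaussianWave_mul_gaussianWave (p q : ℝ) :
    Integrable fun u : ℝ × ℝ => gaussianWave p u.1 * gaussianWave q u.2 := by
  rw [Measure.volume_eq_prod]
  exact (integrable_cexp_quadratic' (by norm_num) _ _).mul_prod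
    (integrable_cexp_quadratic' (by norm_num) _ _)

lemma integrable_gaussian_mul_cos_add (p q : ℝ) :
    Integrable fun u : ℝ × ℝ =>
      Real.exp (-(u.1 ^ 2 + u.2 ^ 2) / 2) * Real.cos (p * u.1 + q * u.2) := by
  simpa only [RCLike.re_to_complex, re_gaussianWave_mul_gaussianWave] using
    (integrable_gaussianWave_mul_gaussianWave p q).re

lemma integral_gaussian_mul_cos_add (p q : ℝ) :
    ∫ u : ℝ × ℝ, Real.exp (-(u.1 ^ 2 + u.2 ^ 2) / 2) * Real.cos (p * u.1 + q * u.2) =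
      2 * π * Real.exp (-(p ^ 2 + q ^ 2) / 2) := by
  have h := integral_re (integrable_gaussianWave_mul_gaussianWave p q)
  simp only [RCLike.re_to_complex, re_gaussianWave_mul_gaussianWave] at h
  rw [h, Measure.volume_eq_prod, integral_prod_mul (gaussianWave p) (gaussianWave q),
    integral_gaussianWave, integral_gaussianWave, ← ofReal_mul, ofReal_re, mul_mul_mul_comm,
    mul_self_sqrt (by positivity), ← Real.exp_add]
  ring_nf

end GaussianWave

section BesselIntegrals

open intervalIntegral

lemma integral_comp_cos_sub (h : ℝ → ℝ) (hh : Continuous h) (β : ℝ) :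
    ∫ θ in (-π)..π, h (cos (θ - β)) = 2 * ∫ θ in 0..π, h (cos θ) := by
  have hper : Function.Periodic (fun θ => h (cos θ)) (2 * π) := fun θ => by simp
  have hcont : Continuous fun θ => h (cos θ) := by fun_prop
  have hshift : ∫ θ in (-π)..π, h (cos (θ - β)) = ∫ θ in (-π)..π, h (cos θ) := by
    rw [integral_comp_sub_right (fun θ => h (cos θ)),
      show π - β = -π - β + 2 * π by ring, hper.intervalIntegral_add_eq (-π - β) (-π)]
    ring_nf
  have hneg : ∫ θ in (-π)..0, h (cos θ) = ∫ θ in 0..π, h (cos θ) := by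
    simpa using (integral_comp_neg (a := 0) (b := π) fun θ => h (cos θ)).symm
  rw [hshift, ← integral_add_adjacent_intervals (b := 0) (hcont.intervalIntegrable _ _)
    (hcont.intervalIntegrable _ _), hneg, two_mul]

lemma integral_cos_mul_cos_eq_J0 (c : ℝ) : ∫ θ in 0..π, cos (c * cos θ) = π * J0 c := by
  have hper : Function.Periodic (fun φ => cos (c * sin φ)) π := fun φ => by
    simp [sin_add_pi, cos_neg]
  have h := integral_comp_add_right (a := 0) (b := π) (fun φ => cos (c * sin φ)) (π / 2)
  simp only [sin_add_pi_div_two, zero_add] at h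
  rw [h, add_comm π, hper.intervalIntegral_add_eq (π / 2) 0, J0, zero_add, ← mul_assoc,
    mul_one_div_cancel pi_ne_zero, one_mul]

lemma integral_cos_mul_cos_sub_eq_J0 (c β : ℝ) :
    ∫ θ in (-π)..π, cos (c * cos (θ - β)) = 2 * π * J0 c := by
  rw [integral_comp_cos_sub (fun t => cos (c * t)) (by fun_prop), integral_cos_mul_cos_eq_J0,
    mul_assoc]

lemma integral_exp_mul_cos_sub_eq_besselI0 (c β : ℝ) :
    ∫ θ in (-π)..π, Real.exp (c * cos (θ - β)) = 2 * π * besselI0 c := by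
  rw [integral_comp_cos_sub (fun t => Real.exp (c * t)) (by fun_prop), besselI0, ← mul_assoc,
    mul_assoc 2, mul_one_div_cancel pi_ne_zero, mul_one]

@[fun_prop]
lemma continuous_J0 : Continuous J0 :=
  continuous_const.mul <| continuous_parametric_intervalIntegral_of_continuous' (by fun_prop) _ _

lemma abs_J0_le_one (c : ℝ) : |J0 c| ≤ 1 := by
  have h : ‖∫ φ in (0 : ℝ)..π, cos (c * sin φ)‖ ≤ 1 * |π - 0| :=
    norm_integral_le_of_norm_le_const fun φ _ => abs_cos_le_one _
  rw [sub_zero, abs_of_pos pi_pos, one_mul, Real.norm_eq_abs] at h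
  rw [J0, abs_mul, abs_of_pos (by positivity), one_div, inv_mul_le_iff₀ pi_pos, mul_one]
  exact h

lemma two_pi_mul_J0_mul_sqrt (x : ℝ) (u : ℝ × ℝ) :
    2 * π * J0 (x * √(u.1 ^ 2 + u.2 ^ 2)) =
      ∫ θ in (-π)..π, cos (x * (u.1 * cos θ + u.2 * sin θ)) := by
  set z : ℂ := ⟨u.1, u.2⟩
  have hz : ‖z‖ = √(u.1 ^ 2 + u.2 ^ 2) := by
    rw [Complex.norm_def, Complex.normSq_mk]; ring_nf
  have hcos : u.1 = ‖z‖ * cos z.arg := (Complex.norm_mul_cos_arg z).symm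
  have hsin : u.2 = ‖z‖ * sin z.arg := (Complex.norm_mul_sin_arg z).symm
  rw [← integral_cos_mul_cos_sub_eq_J0 _ z.arg, ← hz]
  congr 1 with θ
  rw [cos_sub, hcos, hsin]
  ring_nf

end BesselIntegrals

lemma integral_radial_mul_cos (g : ℝ → ℝ) (hg : IntegrableOn (fun ρ => ρ * g ρ) (Ioi 0)) (r : ℝ) :
    ∫ u : ℝ × ℝ, g √(u.1 ^ 2 + u.2 ^ 2) * cos (r * u.1) =
      2 * π * ∫ ρ in Ioi (0 : ℝ), ρ * g ρ * J0 (r * ρ) := by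
  set μ := (volume.restrict (Ioi (0 : ℝ))).prod (volume.restrict (Ioo (-π) π))
  set G : ℝ × ℝ → ℝ := fun p => p.1 * g p.1 * cos (r * p.1 * cos p.2)
  have hpolar : ∫ u : ℝ × ℝ, g √(u.1 ^ 2 + u.2 ^ 2) * cos (r * u.1) =
      ∫ p in Ioi 0 ×ˢ Ioo (-π) π, G p := by
    rw [← integral_comp_polarCoord_symm, polarCoord_target]
    refine setIntegral_congr_fun (measurableSet_Ioi.prod measurableSet_Ioo) fun p hp => ?_
    have hρ : (p.1 * cos p.2) ^ 2 + (p.1 * sin p.2) ^ 2 = p.1 ^ 2 := by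
      linear_combination p.1 ^ 2 * cos_sq_add_sin_sq p.2
    simp only [polarCoord_symm_apply, smul_eq_mul, G, hρ, sqrt_sq (le_of_lt hp.1)]
    ring_nf
  have hG : Integrable G μ :=
    (hg.comp_fst _).mul_bdd (by fun_prop) (c := 1) (by filter_upwards with p using abs_cos_le_one _)
  have hinner (ρ : ℝ) : ∫ θ in Ioo (-π) π, G (ρ, θ) = ρ * g ρ * (2 * π * J0 (r * ρ)) := by
    simp only [G]
    rw [integral_const_mul, ← integral_Ioc_eq_integral_Ioo,
      ← intervalIntegral.integral_of_le (by linarith [pi_pos])]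
    simpa only [sub_zero] using congrArg (ρ * g ρ * ·) (integral_cos_mul_cos_sub_eq_J0 (r * ρ) 0)
  rw [hpolar, Measure.volume_eq_prod, ← Measure.prod_restrict, integral_prod _ hG]
  simp only [hinner, ← integral_const_mul]
  congr 1 with ρ
  ring

lemma integral_gaussian_mul_cos_mul_cos (a b c d : ℝ) :
    ∫ u : ℝ × ℝ, exp (-(u.1 ^ 2 + u.2 ^ 2) / 2) *
        (cos (a * u.1 + b * u.2) * cos (c * u.1 + d * u.2)) =
      π * (exp (-((a + c) ^ 2 + (b + d) ^ 2) / 2) + exp (-((a - c) ^ 2 + (b - d) ^ 2) / 2)) := by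
  have hsplit (u : ℝ × ℝ) :
      exp (-(u.1 ^ 2 + u.2 ^ 2) / 2) * (cos (a * u.1 + b * u.2) * cos (c * u.1 + d * u.2)) =
        (exp (-(u.1 ^ 2 + u.2 ^ 2) / 2) * cos ((a + c) * u.1 + (b + d) * u.2) +
          exp (-(u.1 ^ 2 + u.2 ^ 2) / 2) * cos ((a - c) * u.1 + (b - d) * u.2)) / 2 := by
    rw [show (a + c) * u.1 + (b + d) * u.2 = (a * u.1 + b * u.2) + (c * u.1 + d * u.2) by ring,
      show (a - c) * u.1 + (b - d) * u.2 = (a * u.1 + b * u.2) - (c * u.1 + d * u.2) by ring,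
      cos_add (a * u.1 + b * u.2), cos_sub (a * u.1 + b * u.2)]
    ring
  simp_rw [hsplit]
  rw [integral_div, integral_add (integrable_gaussian_mul_cos_add _ _)
    (integrable_gaussian_mul_cos_add _ _), integral_gaussian_mul_cos_add,
    integral_gaussian_mul_cos_add]
  ring

-- `e^{∓ r x cos θ}` appear as `e^{r x cos (θ - π)}` and `e^{r x cos (θ - 0)}`, ready for
-- `integral_exp_mul_cos_sub_eq_besselI0`.
lemma integral_gaussian_mul_cos_mul_cos_angle (r x θ : ℝ) :
    ∫ u : ℝ × ℝ, exp (-(u.1 ^ 2 + u.2 ^ 2) / 2) *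
        (cos (r * u.1) * cos (x * (u.1 * cos θ + u.2 * sin θ))) =
      π * exp (-(r ^ 2 + x ^ 2) / 2) * (exp (r * x * cos (θ - π)) + exp (r * x * cos (θ - 0))) := by
  have hwave (u : ℝ × ℝ) : cos (r * u.1) * cos (x * (u.1 * cos θ + u.2 * sin θ)) =
      cos (r * u.1 + 0 * u.2) * cos (x * cos θ * u.1 + x * sin θ * u.2) := by
    ring_nf
  have e₁ : -((r + x * cos θ) ^ 2 + (0 + x * sin θ) ^ 2) / 2 =
      -(r ^ 2 + x ^ 2) / 2 + r * x * cos (θ - π) := by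
    rw [cos_sub_pi]; linear_combination (-x ^ 2 / 2) * sin_sq_add_cos_sq θ
  have e₂ : -((r - x * cos θ) ^ 2 + (0 - x * sin θ) ^ 2) / 2 =
      -(r ^ 2 + x ^ 2) / 2 + r * x * cos (θ - 0) := by
    rw [sub_zero]; linear_combination (-x ^ 2 / 2) * sin_sq_add_cos_sq θ
  simp_rw [hwave]
  rw [integral_gaussian_mul_cos_mul_cos, e₁, e₂, exp_add, exp_add]
  ring

lemma integral_gaussian_mul_J0_mul_cos (r x : ℝ) :
    ∫ u : ℝ × ℝ, exp (-(u.1 ^ 2 + u.2 ^ 2) / 2) * J0 (x * √(u.1 ^ 2 + u.2 ^ 2)) * cos (r * u.1) =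
      2 * π * (exp (-(r ^ 2 + x ^ 2) / 2) * besselI0 (r * x)) := by
  set ν := volume.restrict (Ioc (-π) π)
  set F : ℝ × ℝ → ℝ → ℝ := fun u θ =>
    exp (-(u.1 ^ 2 + u.2 ^ 2) / 2) * (cos (r * u.1) * cos (x * (u.1 * cos θ + u.2 * sin θ)))
  have hF : Integrable (Function.uncurry F) ((volume : Measure (ℝ × ℝ)).prod ν) := by
    have hgauss : Integrable fun u : ℝ × ℝ => exp (-(u.1 ^ 2 + u.2 ^ 2) / 2) := by
      simpa using integrable_gaussian_mul_cos_add 0 0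
    refine (hgauss.comp_fst ν).mul_bdd (c := 1) (by fun_prop) (ae_of_all _ fun p => ?_)
    rw [norm_mul]
    exact mul_le_one₀ (abs_cos_le_one _) (norm_nonneg _) (abs_cos_le_one _)
  have hJ (u : ℝ × ℝ) :
      exp (-(u.1 ^ 2 + u.2 ^ 2) / 2) * J0 (x * √(u.1 ^ 2 + u.2 ^ 2)) * cos (r * u.1) =
        (2 * π)⁻¹ * ∫ θ, F u θ ∂ν := by
    simp only [F, ν]
    rw [integral_const_mul, integral_const_mul,
      ← intervalIntegral.integral_of_le (by linarith [pi_pos]), ← two_pi_mul_J0_mul_sqrt]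
    field_simp
  have hcont (β : ℝ) : Continuous fun θ => exp (r * x * cos (θ - β)) := by fun_prop
  calc _ = ∫ u, (2 * π)⁻¹ * ∫ θ, F u θ ∂ν := by simp_rw [hJ]
    _ = (2 * π)⁻¹ * ∫ θ in (-π)..π, ∫ u, F u θ := by
      rw [integral_const_mul, integral_integral_swap hF,
        intervalIntegral.integral_of_le (by linarith [pi_pos])]
    _ = 2 * π * (exp (-(r ^ 2 + x ^ 2) / 2) * besselI0 (r * x)) := by
      simp_rw [F, integral_gaussian_mul_cos_mul_cos_angle]
      rw [intervalIntegral.integral_const_mul, intervalIntegral.integral_add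
        ((hcont π).intervalIntegrable _ _) ((hcont 0).intervalIntegrable _ _),
        integral_exp_mul_cos_sub_eq_besselI0, integral_exp_mul_cos_sub_eq_besselI0]
      field_simp
      ring

lemma integrable_mul_gaussian_mul_J0 (x : ℝ) :
    Integrable fun ρ : ℝ => ρ * (exp (-ρ ^ 2 / 2) * J0 (x * ρ)) := by
  have h := integrable_mul_exp_neg_mul_sq (b := 1 / 2) (by norm_num)
  refine (h.mul_bdd (g := fun ρ => J0 (x * ρ)) (c := 1) (by fun_prop)
    (ae_of_all _ fun ρ => abs_J0_le_one _)).congr (ae_of_all _ fun ρ => ?_)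
  ring_nf

theorem stmt_12_general (r x : ℝ) :
    (∫ ω in Set.Ioi (0 : ℝ), ω * Real.exp (-ω ^ 2 / 2) * J0 (ω * r) * J0 (ω * x)) =
        Real.exp (-(r - x) ^ 2 / 2) * (Real.exp (-(r * x)) * besselI0 (r * x)) ∧
      (∫ ω in Set.Ioi (0 : ℝ), ω * Real.exp (-ω ^ 2 / 2) * J0 (ω * r) * J0 (ω * x)) =
        Real.exp (-(r ^ 2 + x ^ 2) / 2) * besselI0 (r * x) := by
  have hplane := integral_radial_mul_cos (fun ρ => exp (-ρ ^ 2 / 2) * J0 (x * ρ))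
    (integrable_mul_gaussian_mul_J0 x).integrableOn r
  simp only [sq_sqrt (add_nonneg (sq_nonneg _) (sq_nonneg _))] at hplane
  rw [integral_gaussian_mul_J0_mul_cos, mul_right_inj' two_pi_pos.ne'] at hplane
  have key : ∫ ω in Ioi (0 : ℝ), ω * exp (-ω ^ 2 / 2) * J0 (ω * r) * J0 (ω * x) =
      exp (-(r ^ 2 + x ^ 2) / 2) * besselI0 (r * x) := by
    rw [hplane]
    congr 1 with ω
    rw [mul_comm ω r, mul_comm ω x]
    ring
  refine ⟨?_, key⟩
  rw [key, ← mul_assoc, ← exp_add]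
  ring_nf

theorem stmt_12 (r x : ℝ) (hr : 0 ≤ r) (hx : 0 ≤ x) :
    (∫ ω in Set.Ioi (0 : ℝ), ω * Real.exp (-ω ^ 2 / 2) * J0 (ω * r) * J0 (ω * x)) =
        Real.exp (-(r - x) ^ 2 / 2) * (Real.exp (-(r * x)) * besselI0 (r * x)) ∧
      (∫ ω in Set.Ioi (0 : ℝ), ω * Real.exp (-ω ^ 2 / 2) * J0 (ω * r) * J0 (ω * x)) =
        Real.exp (-(r ^ 2 + x ^ 2) / 2) * besselI0 (r * x) :=
  stmt_12_general r x
end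

section
/- For every real t and every real r > 0 there holds (1/√(2π)) ∫₀^∞ [exp(−(r−t+rξ)²/2) / √(ξ(ξ+2))] · (r−t+rξ)(1+ξ) dξ = (1/√(2π)) ∫₀^∞ [exp(−(r−t+rξ)²/2) / √(ξ(ξ+2))] · [ (r(1+ξ) − t)/(1+ξ) + 1/(r(1+ξ)²) ] dξ. -/
/-!
Write `u = r (1 + ξ) - t` and `S = √(ξ (ξ + 2))`, so that `S² = (1 + ξ)² - 1` and
`d/dξ (S / (1 + ξ)) = 1 / ((1 + ξ)² S)`. Then the second integrand minus the first is `1/r`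
times the derivative of `exp (-u² / 2) · S / (1 + ξ)`, which vanishes at `ξ = 0` and at
infinity. The same antiderivative, being monotone with limit `1`, makes `1 / ((1 + ξ)² S)`
integrable on `(0, ∞)`; every integrand is a bounded function times it or times the
integrable `u exp (-u² / 2)`.
-/

open MeasureTheory Real Set Filter Topology

theorem hasDerivAt_sqrt_mul_add_two_div_one_add {ξ : ℝ} (hξ : 0 < ξ) :
    HasDerivAt (fun x => √(x * (x + 2)) / (1 + x))
      (1 / ((1 + ξ) ^ 2 * √(ξ * (ξ + 2)))) ξ := by
  have hpos : 0 < ξ * (ξ + 2) := by positivity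
  have h := (((hasDerivAt_id' ξ).mul ((hasDerivAt_id' ξ).add_const 2)).sqrt hpos.ne').div
    ((hasDerivAt_id' ξ).const_add 1) (by positivity)
  refine h.congr_deriv ?_
  have hS := sq_sqrt hpos.le
  simp only [Pi.mul_apply]
  field_simp
  rw [hS]
  ring

theorem tendsto_sqrt_mul_add_two_div_one_add_atTop :
    Tendsto (fun x : ℝ => √(x * (x + 2)) / (1 + x)) atTop (𝓝 1) := by
  have hinv : Tendsto (fun x : ℝ => (1 + x)⁻¹) atTop (𝓝 0) :=
    tendsto_inv_atTop_zero.comp (tendsto_atTop_add_const_left _ 1 tendsto_id)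
  have hlim : Tendsto (fun x : ℝ => √(1 - (1 + x)⁻¹ ^ 2)) atTop (𝓝 1) := by
    simpa using ((tendsto_const_nhds (x := (1 : ℝ))).sub (hinv.pow 2)).sqrt
  refine hlim.congr' ?_
  filter_upwards [eventually_gt_atTop 0] with x hx
  rw [show 1 - (1 + x)⁻¹ ^ 2 = x * (x + 2) / (1 + x) ^ 2 by field_simp; ring,
    sqrt_div' _ (by positivity), sqrt_sq (by positivity)]

theorem abs_sqrt_mul_add_two_div_one_add_le_one (x : ℝ) : |√(x * (x + 2)) / (1 + x)| ≤ 1 := by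
  rw [abs_div, abs_of_nonneg (sqrt_nonneg _)]
  refine div_le_one_of_le₀ ?_ (abs_nonneg _)
  calc √(x * (x + 2)) ≤ √((1 + x) ^ 2) := sqrt_le_sqrt (by nlinarith)
    _ = |1 + x| := sqrt_sq_eq_abs _

theorem integrableOn_one_div_sq_mul_sqrt :
    IntegrableOn (fun ξ : ℝ => 1 / ((1 + ξ) ^ 2 * √(ξ * (ξ + 2)))) (Ioi 0) :=
  integrableOn_Ioi_deriv_of_nonneg
    ((ContinuousAt.div (by fun_prop) (by fun_prop) (by norm_num)).continuousWithinAt)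
    (fun _ hξ => hasDerivAt_sqrt_mul_add_two_div_one_add hξ) (fun _ _ => by positivity)
    tendsto_sqrt_mul_add_two_div_one_add_atTop

theorem abs_mul_exp_neg_sq_div_two_le_one (u : ℝ) : |u| * exp (-u ^ 2 / 2) ≤ 1 := by
  calc |u| * exp (-u ^ 2 / 2) ≤ exp (u ^ 2 / 2) * exp (-u ^ 2 / 2) := by
        gcongr
        nlinarith [add_one_le_exp (u ^ 2 / 2), sq_abs u, sq_nonneg (|u| - 1)]
    _ = 1 := by rw [← exp_add]; ring_nf; exact exp_zero

theorem abs_mul_add_mul_exp_neg_sq_div_two_le (u a : ℝ) :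
    |u * (u + a)| * exp (-u ^ 2 / 2) ≤ 2 + |a| := by
  have hsq : u ^ 2 * exp (-u ^ 2 / 2) ≤ 2 := by
    calc u ^ 2 * exp (-u ^ 2 / 2) ≤ 2 * exp (u ^ 2 / 2) * exp (-u ^ 2 / 2) := by
          gcongr
          linarith [add_one_le_exp (u ^ 2 / 2)]
      _ = 2 := by rw [mul_assoc, ← exp_add]; ring_nf; simp
  have habs : |u * (u + a)| ≤ u ^ 2 + |a| * |u| := by
    rw [abs_mul, mul_comm |a|, ← sq_abs u, sq]
    nlinarith [abs_add_le u a, abs_nonneg u]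
  nlinarith [abs_mul_exp_neg_sq_div_two_le_one u, exp_pos (-u ^ 2 / 2), abs_nonneg a]

theorem integrable_affine_mul_exp_neg_sq_div_two {r : ℝ} (hr : r ≠ 0) (s : ℝ) :
    Integrable fun ξ : ℝ => (s + r * ξ) * exp (-(s + r * ξ) ^ 2 / 2) := by
  convert ((integrable_mul_exp_neg_mul_sq (b := 1 / 2) (by norm_num)).comp_add_right s
    ).comp_mul_left' hr using 2 with ξ
  ring_nf

section

variable {r : ℝ} (t : ℝ)

theorem integrable_mul_exp_mul_sqrt_div (hr : r ≠ 0) :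
    Integrable fun ξ : ℝ =>
      (r - t + r * ξ) * exp (-(r - t + r * ξ) ^ 2 / 2) * (√(ξ * (ξ + 2)) / (1 + ξ)) :=
  (integrable_affine_mul_exp_neg_sq_div_two hr _).mul_bdd
    (Measurable.aestronglyMeasurable (by fun_prop))
    (ae_of_all _ fun ξ => abs_sqrt_mul_add_two_div_one_add_le_one ξ)

theorem integrableOn_exp_mul_one_div_sq_mul_sqrt :
    IntegrableOn (fun ξ : ℝ =>
      exp (-(r - t + r * ξ) ^ 2 / 2) * (1 / ((1 + ξ) ^ 2 * √(ξ * (ξ + 2))))) (Ioi 0) :=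
  integrableOn_one_div_sq_mul_sqrt.bdd_mul (by fun_prop) (ae_of_all _ fun ξ => by
    rw [norm_of_nonneg (exp_pos _).le, exp_le_one_iff]
    nlinarith [sq_nonneg (r - t + r * ξ)])

theorem integrableOn_mul_mul_exp_mul_one_div_sq_mul_sqrt (hr : r ≠ 0) :
    IntegrableOn (fun ξ : ℝ => (r - t + r * ξ) * (1 + ξ) * exp (-(r - t + r * ξ) ^ 2 / 2) *
      (1 / ((1 + ξ) ^ 2 * √(ξ * (ξ + 2))))) (Ioi 0) := by
  refine integrableOn_one_div_sq_mul_sqrt.bdd_mul (c := (2 + |t|) / |r|) (by fun_prop)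
    (ae_of_all _ fun ξ => ?_)
  have hu : (r - t + r * ξ) * (1 + ξ) = (r - t + r * ξ) * (r - t + r * ξ + t) / r := by
    field_simp; ring
  rw [hu, norm_mul, norm_div, norm_of_nonneg (exp_pos _).le, norm_eq_abs, norm_eq_abs,
    div_mul_eq_mul_div, div_le_div_iff_of_pos_right (abs_pos.2 hr)]
  exact abs_mul_add_mul_exp_neg_sq_div_two_le _ _

theorem hasDerivAt_exp_mul_sqrt_div {ξ : ℝ} (hξ : 0 < ξ) :
    HasDerivAt (fun x => exp (-(r - t + r * x) ^ 2 / 2) * (√(x * (x + 2)) / (1 + x)))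
      (exp (-(r - t + r * ξ) ^ 2 / 2) * (1 / ((1 + ξ) ^ 2 * √(ξ * (ξ + 2)))) -
        r * ((r - t + r * ξ) * exp (-(r - t + r * ξ) ^ 2 / 2) *
          (√(ξ * (ξ + 2)) / (1 + ξ)))) ξ := by
  have hu : HasDerivAt (fun x => -(r - t + r * x) ^ 2 / 2) (-(r - t + r * ξ) * r) ξ := by
    have := ((((hasDerivAt_id' ξ).const_mul r).const_add (r - t)).pow 2).neg.div_const 2
    exact this.congr_deriv (by ring)
  refine (hu.exp.mul (hasDerivAt_sqrt_mul_add_two_div_one_add hξ)).congr_deriv ?_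
  ring

theorem tendsto_exp_mul_sqrt_div_atTop (hr : 0 < r) :
    Tendsto (fun x => exp (-(r - t + r * x) ^ 2 / 2) * (√(x * (x + 2)) / (1 + x)))
      atTop (𝓝 0) := by
  have hu : Tendsto (fun x => r - t + r * x) atTop atTop :=
    tendsto_atTop_add_const_left _ _ (tendsto_id.const_mul_atTop hr)
  have hexp : Tendsto (fun x => exp (-(r - t + r * x) ^ 2 / 2)) atTop (𝓝 0) := by
    refine tendsto_exp_atBot.comp ?_
    simpa only [neg_div, Function.comp_def] using tendsto_neg_atTop_atBot.comp
      (((tendsto_pow_atTop two_ne_zero).comp hu).atTop_div_const two_pos)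
  simpa using hexp.mul tendsto_sqrt_mul_add_two_div_one_add_atTop

theorem integral_exp_mul_one_div_sq_mul_sqrt (hr : 0 < r) :
    ∫ ξ in Ioi (0 : ℝ),
        exp (-(r - t + r * ξ) ^ 2 / 2) * (1 / ((1 + ξ) ^ 2 * √(ξ * (ξ + 2)))) =
      r * ∫ ξ in Ioi (0 : ℝ),
        (r - t + r * ξ) * exp (-(r - t + r * ξ) ^ 2 / 2) * (√(ξ * (ξ + 2)) / (1 + ξ)) := by
  have hb := integrableOn_exp_mul_one_div_sq_mul_sqrt t (r := r)
  have ha := ((integrable_mul_exp_mul_sqrt_div t hr.ne').const_mul r).integrableOn (s := Ioi 0)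
  have hftc := integral_Ioi_of_hasDerivAt_of_tendsto
    (ContinuousAt.continuousWithinAt (by fun_prop (disch := norm_num)))
    (fun _ hξ => hasDerivAt_exp_mul_sqrt_div t hξ) (hb.sub ha)
    (tendsto_exp_mul_sqrt_div_atTop t hr)
  rw [integral_sub hb ha, integral_const_mul] at hftc
  simpa [sub_eq_zero] using hftc

theorem integral_velocity_integrand_eq (hr : r ≠ 0) :
    ∫ ξ in Ioi (0 : ℝ), exp (-(r - t + r * ξ) ^ 2 / 2) / √(ξ * (ξ + 2)) *
        ((r - t + r * ξ) * (1 + ξ)) =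
      (∫ ξ in Ioi (0 : ℝ),
        (r - t + r * ξ) * exp (-(r - t + r * ξ) ^ 2 / 2) * (√(ξ * (ξ + 2)) / (1 + ξ))) +
      ∫ ξ in Ioi (0 : ℝ), (r - t + r * ξ) * (1 + ξ) * exp (-(r - t + r * ξ) ^ 2 / 2) *
        (1 / ((1 + ξ) ^ 2 * √(ξ * (ξ + 2)))) := by
  rw [← integral_add (integrable_mul_exp_mul_sqrt_div t hr).integrableOn
    (integrableOn_mul_mul_exp_mul_one_div_sq_mul_sqrt t hr)]
  refine setIntegral_congr_fun measurableSet_Ioi fun ξ (hξ : 0 < ξ) => ?_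
  have hpos : 0 < ξ * (ξ + 2) := by positivity
  have hS := sq_sqrt hpos.le
  have hS_pos := sqrt_pos.2 hpos
  field_simp
  rw [hS]
  ring

theorem integral_regularized_integrand_eq (hr : r ≠ 0) :
    ∫ ξ in Ioi (0 : ℝ), exp (-(r - t + r * ξ) ^ 2 / 2) / √(ξ * (ξ + 2)) *
        ((r * (1 + ξ) - t) / (1 + ξ) + 1 / (r * (1 + ξ) ^ 2)) =
      (∫ ξ in Ioi (0 : ℝ), (r - t + r * ξ) * (1 + ξ) * exp (-(r - t + r * ξ) ^ 2 / 2) *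
        (1 / ((1 + ξ) ^ 2 * √(ξ * (ξ + 2))))) +
      (∫ ξ in Ioi (0 : ℝ),
        exp (-(r - t + r * ξ) ^ 2 / 2) * (1 / ((1 + ξ) ^ 2 * √(ξ * (ξ + 2))))) / r := by
  rw [← integral_div, ← integral_add (integrableOn_mul_mul_exp_mul_one_div_sq_mul_sqrt t hr)
    ((integrableOn_exp_mul_one_div_sq_mul_sqrt t).div_const r)]
  refine setIntegral_congr_fun measurableSet_Ioi fun ξ (hξ : 0 < ξ) => ?_
  have hS_pos := sqrt_pos.2 (by positivity : 0 < ξ * (ξ + 2))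
  field_simp
  ring

end

theorem stmt_17 (t r : ℝ) (hr : 0 < r) :
    (1 / Real.sqrt (2 * Real.pi)) * (∫ ξ in Set.Ioi (0 : ℝ),
        Real.exp (-(r - t + r * ξ) ^ 2 / 2) / Real.sqrt (ξ * (ξ + 2)) *
          ((r - t + r * ξ) * (1 + ξ))) =
      (1 / Real.sqrt (2 * Real.pi)) * ∫ ξ in Set.Ioi (0 : ℝ),
        Real.exp (-(r - t + r * ξ) ^ 2 / 2) / Real.sqrt (ξ * (ξ + 2)) *
          ((r * (1 + ξ) - t) / (1 + ξ) + 1 / (r * (1 + ξ) ^ 2)) := by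
  rw [integral_velocity_integrand_eq t hr.ne', integral_regularized_integrand_eq t hr.ne',
    integral_exp_mul_one_div_sq_mul_sqrt t hr, mul_div_cancel_left₀ _ hr.ne', add_comm]
end

section
/- Let j ≥ 0 be an integer, let t ≥ 0 and r ≥ 0 be real, and let ζ ∈ ℂ. Then |exp(−(r − tζ)²/2) · Ĩⱼ(rtζ)| ≤ exp((t · Im ζ)² / 2). -/
open MeasureTheory

/-- Modified Bessel function of the first kind of integer order `j`, for complex argument:
`Iⱼ(z) = (1/π)∫₀^π e^{z cos φ} cos(jφ) dφ`. -/
noncomputable def besselIC (j : ℕ) (z : ℂ) : ℂ :=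
  (1 / (Real.pi : ℂ)) * ∫ φ in (0 : ℝ)..Real.pi,
    Complex.exp (z * (Real.cos φ : ℂ)) * (Real.cos (j * φ) : ℂ)

/-- `Ĩⱼ(z) = e^{−z} Iⱼ(z)`. -/
noncomputable def ItildeC (j : ℕ) (z : ℂ) : ℂ := Complex.exp (-z) * besselIC j z

/-! The Gaussian factor contributes `exp (((t Im ζ)² - (r - t Re ζ)²) / 2)` and `|Ĩⱼ(z)|` is at
most `exp (|Re z| - Re z)` with `z = r · tζ`; the loss `|uv| - uv` is absorbed by `(u - v)² / 2`
since `2|uv| ≤ u² + v²`. -/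

lemma norm_exp_mul_ofReal_cos_le (z : ℂ) (φ : ℝ) :
    ‖Complex.exp (z * (Real.cos φ : ℂ))‖ ≤ Real.exp |z.re| := by
  rw [Complex.norm_exp, Complex.re_mul_ofReal, Real.exp_le_exp]
  calc z.re * Real.cos φ ≤ |z.re * Real.cos φ| := le_abs_self _
    _ = |z.re| * |Real.cos φ| := abs_mul _ _
    _ ≤ |z.re| := mul_le_of_le_one_right (abs_nonneg _) (Real.abs_cos_le_one φ)

lemma norm_besselIC_le (j : ℕ) (z : ℂ) : ‖besselIC j z‖ ≤ Real.exp |z.re| := by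
  have hπ := Real.pi_pos
  have hint : ‖∫ φ in (0 : ℝ)..Real.pi,
      Complex.exp (z * (Real.cos φ : ℂ)) * (Real.cos (j * φ) : ℂ)‖ ≤ Real.exp |z.re| * Real.pi := by
    refine (intervalIntegral.norm_integral_le_of_norm_le_const fun φ _ => ?_).trans_eq
      (by rw [sub_zero, abs_of_pos hπ])
    rw [norm_mul, Complex.norm_real, Real.norm_eq_abs]
    exact (mul_le_of_le_one_right (norm_nonneg _) (Real.abs_cos_le_one _)).trans
      (norm_exp_mul_ofReal_cos_le z φ)
  rw [besselIC, norm_mul, norm_div, norm_one, Complex.norm_real, Real.norm_eq_abs, abs_of_pos hπ]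
  calc 1 / Real.pi * _ ≤ 1 / Real.pi * (Real.exp |z.re| * Real.pi) := by gcongr
    _ = Real.exp |z.re| := by field_simp

lemma norm_ItildeC_le (j : ℕ) (z : ℂ) : ‖ItildeC j z‖ ≤ Real.exp (|z.re| - z.re) := by
  rw [ItildeC, norm_mul, Complex.norm_exp, Complex.neg_re, sub_eq_neg_add, Real.exp_add]
  exact mul_le_mul_of_nonneg_left (norm_besselIC_le j z) (Real.exp_pos _).le

lemma norm_exp_neg_sq_div_two (w : ℂ) :
    ‖Complex.exp (-w ^ 2 / 2)‖ = Real.exp ((w.im ^ 2 - w.re ^ 2) / 2) := by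
  rw [Complex.norm_exp, Complex.div_ofNat_re, Complex.neg_re, sq, Complex.mul_re]
  ring_nf

lemma abs_mul_sub_mul_le_sq_sub_div_two (u v : ℝ) : |u * v| - u * v ≤ (u - v) ^ 2 / 2 := by
  rcases abs_cases (u * v) with ⟨h, _⟩ | ⟨h, _⟩ <;> rw [h] <;>
    nlinarith [sq_nonneg (u + v), sq_nonneg (u - v)]

theorem stmt_19_general (j : ℕ) (t r : ℝ) (ζ : ℂ) :
    ‖Complex.exp (-((r : ℂ) - (t : ℂ) * ζ) ^ 2 / 2) * ItildeC j ((r : ℂ) * (t : ℂ) * ζ)‖ ≤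
      Real.exp ((t * ζ.im) ^ 2 / 2) := by
  have hw : ((r : ℂ) - t * ζ).re = r - t * ζ.re ∧ ((r : ℂ) - t * ζ).im = -(t * ζ.im) := by simp
  have hz : ((r : ℂ) * t * ζ).re = r * (t * ζ.re) := by simp [mul_assoc]
  rw [norm_mul, norm_exp_neg_sq_div_two, hw.1, hw.2]
  calc _ ≤ Real.exp (((-(t * ζ.im)) ^ 2 - (r - t * ζ.re) ^ 2) / 2) *
        Real.exp (|r * (t * ζ.re)| - r * (t * ζ.re)) := by
        rw [← hz]; exact mul_le_mul_of_nonneg_left (norm_ItildeC_le j _) (Real.exp_pos _).le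
    _ ≤ Real.exp ((t * ζ.im) ^ 2 / 2) := by
      rw [← Real.exp_add, Real.exp_le_exp]
      linarith [abs_mul_sub_mul_le_sq_sub_div_two r (t * ζ.re)]

theorem stmt_19 (j : ℕ) (t r : ℝ) (ht : 0 ≤ t) (hr : 0 ≤ r) (ζ : ℂ) :
    ‖Complex.exp (-((r : ℂ) - (t : ℂ) * ζ) ^ 2 / 2) * ItildeC j ((r : ℂ) * (t : ℂ) * ζ)‖ ≤
      Real.exp ((t * ζ.im) ^ 2 / 2) :=
  stmt_19_general j t r ζ
end
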